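/- arXiv:math/0501158 — 11 statements merged into one kernel-verified Lean document; each statement's English description precedes it below -/
import Mathlib

section
/- (Gǎvruta stability theorem) Let (G,+) be an abelian group, E a Banach space, and φ : G × G → [0,∞) a function such that φ̃(x,y) := (1/2) ∑_{n=0}^∞ 2^{-n} φ(2^n x, 2^n y) < ∞ for all x, y ∈ G. If f : G → E satisfies ‖f(x+y) − f(x) − f(y)‖ ≤ φ(x,y) for all x, y ∈ G, then there exists a unique additive mapping T : G → E such that ‖f(x) − T(x)‖ ≤ φ̃(x,x) for all x ∈ G. -/
open Filter Topology

/-- Gǎvruta's stability theorem. -/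
theorem gavruta_stability {G E : Type*} [AddCommGroup G]
    [NormedAddCommGroup E] [NormedSpace ℝ E] [CompleteSpace E]
    (φ : G → G → ℝ) (hφ : ∀ x y, 0 ≤ φ x y)
    (hsum : ∀ x y : G, Summable fun n : ℕ => φ ((2^n : ℕ) • x) ((2^n : ℕ) • y) / 2^n)
    (f : G → E)
    (hf : ∀ x y : G, ‖f (x + y) - f x - f y‖ ≤ φ x y) :
    ∃! T : G → E,
      (∀ x y, T (x + y) = T x + T y) ∧
      (∀ x : G, ‖f x - T x‖ ≤ (1/2) * ∑' n : ℕ, φ ((2^n : ℕ) • x) ((2^n : ℕ) • x) / 2^n) := by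
  classical
  set g : G → ℕ → E := fun x n => ((2:ℝ)^n)⁻¹ • f ((2^n : ℕ) • x) with hg
  have hdouble : ∀ (x : G) (n : ℕ), ((2^(n+1) : ℕ) • x) = (2^n : ℕ) • x + (2^n : ℕ) • x := by
    intro x n
    rw [← add_nsmul]
    congr 1
    ring
  have hstep : ∀ (x : G) (n : ℕ),
      dist (g x n) (g x (n+1)) ≤ φ ((2^n:ℕ) • x) ((2^n:ℕ) • x) / 2^(n+1) := by
    intro x n
    have h1 := hf ((2^n:ℕ) • x) ((2^n:ℕ) • x)
    rw [← hdouble x n] at h1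
    have heq : g x n - g x (n+1) =
        -(((2:ℝ)^(n+1))⁻¹ • (f ((2^(n+1):ℕ) • x) - f ((2^n:ℕ) • x) - f ((2^n:ℕ) • x))) := by
      simp only [hg]
      have h2 : ((2:ℝ)^n)⁻¹ = (2:ℝ) * ((2:ℝ)^(n+1))⁻¹ := by
        rw [pow_succ]
        field_simp
      rw [h2]
      module
    rw [dist_eq_norm, heq, norm_neg, norm_smul]
    have hpos : (0:ℝ) < (2:ℝ)^(n+1) := by positivity
    rw [norm_inv, norm_pow, Real.norm_ofNat]
    rw [div_eq_inv_mul]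
    gcongr
  have hd : ∀ x y : G, Summable fun n : ℕ => φ ((2^n:ℕ) • x) ((2^n:ℕ) • y) / 2^(n+1) := by
    intro x y
    have := (hsum x y).div_const 2
    refine this.congr fun n => ?_
    rw [pow_succ]
    ring
  have hcauchy : ∀ x : G, CauchySeq (g x) :=
    fun x => cauchySeq_of_dist_le_of_summable _ (hstep x) (hd x x)
  have hT : ∀ x : G, ∃ L, Tendsto (g x) atTop (𝓝 L) :=
    fun x => cauchySeq_tendsto_of_complete (hcauchy x)
  choose T hTlim using hT
  -- the error bound
  have hbound : ∀ x : G, ‖f x - T x‖ ≤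
      (1/2) * ∑' n : ℕ, φ ((2^n : ℕ) • x) ((2^n : ℕ) • x) / 2^n := by
    intro x
    have h0 : g x 0 = f x := by simp [hg]
    have := dist_le_tsum_of_dist_le_of_tendsto₀ _ (hstep x) (hd x x) (hTlim x)
    rw [h0, dist_eq_norm] at this
    refine this.trans_eq ?_
    rw [one_div, inv_mul_eq_div, ← tsum_div_const]
    congr 1
    ext n
    rw [pow_succ]
    ring
  -- additivity
  have hadd : ∀ x y : G, T (x + y) = T x + T y := by
    intro x y
    have hsmul : ∀ n : ℕ, (2^n : ℕ) • (x + y) = (2^n:ℕ) • x + (2^n:ℕ) • y :=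
      fun n => smul_add _ _ _
    have hnorm : ∀ n : ℕ, ‖g (x+y) n - g x n - g y n‖ ≤ φ ((2^n:ℕ) • x) ((2^n:ℕ) • y) / 2^n := by
      intro n
      have heq : g (x+y) n - g x n - g y n =
          ((2:ℝ)^n)⁻¹ • (f ((2^n:ℕ) • x + (2^n:ℕ) • y) - f ((2^n:ℕ) • x) - f ((2^n:ℕ) • y)) := by
        simp only [hg, hsmul n]
        module
      rw [heq, norm_smul, norm_inv, norm_pow, Real.norm_ofNat, div_eq_inv_mul]
      gcongr
      exact hf _ _
    have htend0 : Tendsto (fun n => g (x+y) n - g x n - g y n) atTop (𝓝 0) := by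
      refine squeeze_zero_norm hnorm ?_
      exact (hsum x y).tendsto_atTop_zero
    have htend1 : Tendsto (fun n => g (x+y) n - g x n - g y n) atTop
        (𝓝 (T (x+y) - T x - T y)) :=
      ((hTlim (x+y)).sub (hTlim x)).sub (hTlim y)
    have heq0 := tendsto_nhds_unique htend1 htend0
    rw [sub_sub] at heq0
    exact sub_eq_zero.mp heq0
  refine ⟨T, ⟨hadd, hbound⟩, ?_⟩
  rintro T' ⟨hT'add, hT'bound⟩
  -- uniqueness
  funext x
  have hpow : ∀ (n : ℕ) (z : G), T' ((2^n : ℕ) • z) = (2^n : ℕ) • T' z := by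
    intro n z
    induction n with
    | zero => simp
    | succ n ih =>
      rw [hdouble z n, hT'add, ih, ← add_nsmul]
      congr 1
      ring
  -- tail estimate
  have hkey : ∀ n : ℕ, ‖g x n - T' x‖ ≤
      (1/2) * ∑' k : ℕ, φ ((2^(k+n) : ℕ) • x) ((2^(k+n) : ℕ) • x) / 2^(k+n) := by
    intro n
    have h1 := hT'bound ((2^n : ℕ) • x)
    rw [hpow n x] at h1
    have heq : g x n - T' x = ((2:ℝ)^n)⁻¹ • (f ((2^n:ℕ) • x) - (2^n : ℕ) • T' x) := by
      simp only [hg, smul_sub]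
      congr 1
      rw [← Nat.cast_smul_eq_nsmul ℝ, smul_smul]
      norm_num
    rw [heq, norm_smul, norm_inv, norm_pow, Real.norm_ofNat]
    calc ((2:ℝ)^n)⁻¹ * ‖f ((2^n:ℕ) • x) - (2^n : ℕ) • T' x‖
        ≤ ((2:ℝ)^n)⁻¹ * ((1/2) * ∑' k : ℕ, φ ((2^k : ℕ) • ((2^n:ℕ) • x)) ((2^k : ℕ) • ((2^n:ℕ) • x)) / 2^k) := by
          gcongr
      _ = (1/2) * ∑' k : ℕ, φ ((2^(k+n) : ℕ) • x) ((2^(k+n) : ℕ) • x) / 2^(k+n) := by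
          rw [← mul_assoc, mul_comm (((2:ℝ)^n)⁻¹) (1/2:ℝ), mul_assoc, ← tsum_mul_left]
          congr 1
          refine tsum_congr fun k => ?_
          have hs : (2^k : ℕ) • ((2^n:ℕ) • x) = (2^(k+n) : ℕ) • x := by
            rw [smul_smul, ← pow_add]
          rw [hs, pow_add (2:ℝ) k n]
          ring
  have htail : Tendsto (fun n => (1/2) * ∑' k : ℕ,
      φ ((2^(k+n) : ℕ) • x) ((2^(k+n) : ℕ) • x) / 2^(k+n)) atTop (𝓝 0) := by
    have := (tendsto_sum_nat_add (fun k => φ ((2^k : ℕ) • x) ((2^k : ℕ) • x) / 2^k)).const_mul (1/2:ℝ)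
    simpa using this
  have hlim' : Tendsto (g x) atTop (𝓝 (T' x)) := by
    have : Tendsto (fun n => g x n - T' x) atTop (𝓝 0) :=
      squeeze_zero_norm hkey htail
    have h2 := this.add (tendsto_const_nhds (x := T' x))
    simpa using h2
  exact tendsto_nhds_unique hlim' (hTlim x)
end

section
/- (Hyers–Ulam–Rassias stability) Let E₁, E₂ be real normed spaces with E₂ complete, ε ≥ 0, and 0 ≤ p < 1. If f : E₁ → E₂ satisfies ‖f(x+y) − f(x) − f(y)‖ ≤ ε(‖x‖^p + ‖y‖^p) for all x, y ∈ E₁, then there exists a unique additive map T : E₁ → E₂ with ‖f(x) − T(x)‖ ≤ (2ε/(2 − 2^p))‖x‖^p for all x ∈ E₁, and T(x) = lim_{n→∞} 2^{-n} f(2^n x). -/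
/-!
Hyers' direct method. Put `gₙ(x) = 2⁻ⁿ f(2ⁿ x)`. Taking both arguments equal to `2ⁿ x` in the
hypothesis gives `‖gₙ(x) - gₙ₊₁(x)‖ ≤ ε ‖x‖ᵖ rⁿ` with `r = 2ᵖ / 2 < 1`, so `gₙ(x)` is Cauchy with a
limit `T x`, and summing the geometric series bounds `‖f x - T x‖` by `ε ‖x‖ᵖ / (1 - r)`. The Cauchy
difference of `gₙ` is likewise `O(rⁿ)`, so `T` is additive. Uniqueness is immediate from the limit
formula.
-/

open Filter Topology

lemma rpow_norm_two_pow_smul {E : Type*} [NormedAddCommGroup E] [NormedSpace ℝ E]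
    (x : E) (p : ℝ) (n : ℕ) : ‖(2 : ℝ) ^ n • x‖ ^ p = (2 ^ p) ^ n * ‖x‖ ^ p := by
  rw [norm_smul, Real.mul_rpow (norm_nonneg _) (norm_nonneg _), Real.norm_of_nonneg (by positivity),
    Real.rpow_pow_comm zero_le_two]

lemma norm_sub_inv_two_smul {E : Type*} [NormedAddCommGroup E] [NormedSpace ℝ E] (a b : E) :
    ‖a - (2 : ℝ)⁻¹ • b‖ = 2⁻¹ * ‖b - a - a‖ := by
  rw [show a - (2 : ℝ)⁻¹ • b = -((2 : ℝ)⁻¹ • (b - a - a)) by module, norm_neg, norm_smul, norm_inv,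
    Real.norm_two]

lemma two_rpow_div_two_lt_one {p : ℝ} (hp : p < 1) : (2 : ℝ) ^ p / 2 < 1 :=
  (div_lt_one two_pos).2 (Real.rpow_lt_self_of_one_lt one_lt_two hp)

section

variable {E₁ E₂ : Type*} [NormedAddCommGroup E₁] [NormedSpace ℝ E₁]
  [NormedAddCommGroup E₂] [NormedSpace ℝ E₂]

noncomputable def hyersSeq (f : E₁ → E₂) (x : E₁) (n : ℕ) : E₂ :=
  ((2 : ℝ) ^ n)⁻¹ • f ((2 : ℝ) ^ n • x)

noncomputable def hyersLimit (f : E₁ → E₂) (x : E₁) : E₂ :=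
  limUnder atTop (hyersSeq f x)

variable (f : E₁ → E₂)

lemma hyersSeq_zero (x : E₁) : hyersSeq f x 0 = f x := by
  simp [hyersSeq]

lemma hyersSeq_add_sub (x y : E₁) (n : ℕ) :
    hyersSeq f (x + y) n - hyersSeq f x n - hyersSeq f y n = ((2 : ℝ) ^ n)⁻¹ •
      (f ((2 : ℝ) ^ n • x + (2 : ℝ) ^ n • y) - f ((2 : ℝ) ^ n • x) - f ((2 : ℝ) ^ n • y)) := by
  simp only [hyersSeq, smul_add, smul_sub]

lemma hyersSeq_sub_hyersSeq_succ (x : E₁) (n : ℕ) :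
    hyersSeq f x n - hyersSeq f x (n + 1) = ((2 : ℝ) ^ n)⁻¹ •
      (f ((2 : ℝ) ^ n • x) - (2 : ℝ)⁻¹ • f ((2 : ℝ) ^ n • x + (2 : ℝ) ^ n • x)) := by
  rw [hyersSeq, hyersSeq, ← two_smul ℝ ((2 : ℝ) ^ n • x), smul_smul, ← pow_succ', pow_succ,
    mul_inv, mul_smul, smul_sub]

variable {f} {ε p : ℝ}
  (hf : ∀ x y : E₁, ‖f (x + y) - f x - f y‖ ≤ ε * (‖x‖ ^ p + ‖y‖ ^ p))
include hf

lemma norm_hyersSeq_add_sub_le (x y : E₁) (n : ℕ) :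
    ‖hyersSeq f (x + y) n - hyersSeq f x n - hyersSeq f y n‖ ≤
      ε * (‖x‖ ^ p + ‖y‖ ^ p) * (2 ^ p / 2) ^ n := by
  have h := hf ((2 : ℝ) ^ n • x) ((2 : ℝ) ^ n • y)
  rw [rpow_norm_two_pow_smul, rpow_norm_two_pow_smul] at h
  rw [hyersSeq_add_sub, norm_smul, norm_inv, Real.norm_of_nonneg (by positivity), div_pow,
    inv_mul_le_iff₀ (by positivity)]
  refine h.trans_eq ?_
  field_simp

lemma dist_hyersSeq_succ_le (x : E₁) (n : ℕ) :
    dist (hyersSeq f x n) (hyersSeq f x (n + 1)) ≤ ε * ‖x‖ ^ p * (2 ^ p / 2) ^ n := by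
  have h := hf ((2 : ℝ) ^ n • x) ((2 : ℝ) ^ n • x)
  rw [rpow_norm_two_pow_smul] at h
  rw [dist_eq_norm, hyersSeq_sub_hyersSeq_succ, norm_smul, norm_inv,
    Real.norm_of_nonneg (by positivity), norm_sub_inv_two_smul, div_pow,
    inv_mul_le_iff₀ (by positivity)]
  calc _ ≤ 2⁻¹ * (ε * ((2 ^ p) ^ n * ‖x‖ ^ p + (2 ^ p) ^ n * ‖x‖ ^ p)) := by gcongr
    _ = _ := by field_simp; ring

lemma cauchySeq_hyersSeq (hp : p < 1) (x : E₁) : CauchySeq (hyersSeq f x) :=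
  cauchySeq_of_le_geometric _ _ (two_rpow_div_two_lt_one hp) (dist_hyersSeq_succ_le hf x)

variable [CompleteSpace E₂]

lemma tendsto_hyersSeq (hp : p < 1) (x : E₁) :
    Tendsto (hyersSeq f x) atTop (𝓝 (hyersLimit f x)) :=
  (cauchySeq_hyersSeq hf hp x).tendsto_limUnder

lemma norm_sub_hyersLimit_le (hp : p < 1) (x : E₁) :
    ‖f x - hyersLimit f x‖ ≤ (2 * ε / (2 - 2 ^ p)) * ‖x‖ ^ p := by
  have h := dist_le_of_le_geometric_of_tendsto₀ _ _ (two_rpow_div_two_lt_one hp)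
    (dist_hyersSeq_succ_le hf x) (tendsto_hyersSeq hf hp x)
  rw [hyersSeq_zero, dist_eq_norm] at h
  refine h.trans_eq ?_
  have h2p : (2 : ℝ) - 2 ^ p ≠ 0 := sub_ne_zero.2 (Real.rpow_lt_self_of_one_lt one_lt_two hp).ne'
  field_simp

lemma hyersLimit_add (hp : p < 1) (x y : E₁) :
    hyersLimit f (x + y) = hyersLimit f x + hyersLimit f y := by
  have hlim := ((tendsto_hyersSeq hf hp (x + y)).sub (tendsto_hyersSeq hf hp x)).sub
    (tendsto_hyersSeq hf hp y)
  have hzero :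
      Tendsto (fun n ↦ hyersSeq f (x + y) n - hyersSeq f x n - hyersSeq f y n) atTop (𝓝 0) := by
    refine squeeze_zero_norm (norm_hyersSeq_add_sub_le hf x y) ?_
    simpa using (tendsto_pow_atTop_nhds_zero_of_lt_one (by positivity)
      (two_rpow_div_two_lt_one hp)).const_mul (ε * (‖x‖ ^ p + ‖y‖ ^ p))
  rw [← sub_eq_zero, ← sub_sub]
  exact tendsto_nhds_unique hlim hzero

end

theorem rassias_stability_general {E₁ E₂ : Type*}
    [NormedAddCommGroup E₁] [NormedSpace ℝ E₁]
    [NormedAddCommGroup E₂] [NormedSpace ℝ E₂] [CompleteSpace E₂]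
    (ε : ℝ) (p : ℝ) (hp1 : p < 1)
    (f : E₁ → E₂)
    (hf : ∀ x y : E₁, ‖f (x + y) - f x - f y‖ ≤ ε * (‖x‖ ^ p + ‖y‖ ^ p)) :
    ∃! T : E₁ → E₂,
      (∀ x y, T (x + y) = T x + T y) ∧
      (∀ x : E₁, ‖f x - T x‖ ≤ (2 * ε / (2 - 2 ^ p)) * ‖x‖ ^ p) ∧
      (∀ x : E₁, Tendsto (fun n : ℕ => ((2:ℝ)^n)⁻¹ • f ((2:ℝ)^n • x)) atTop (nhds (T x))) := by
  refine ⟨hyersLimit f,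
    ⟨hyersLimit_add hf hp1, norm_sub_hyersLimit_le hf hp1, tendsto_hyersSeq hf hp1⟩, ?_⟩
  rintro T ⟨-, -, hT⟩
  exact funext fun x ↦ tendsto_nhds_unique (hT x) (tendsto_hyersSeq hf hp1 x)

/-- Hyers–Ulam–Rassias stability for `0 ≤ p < 1`. -/
theorem rassias_stability {E₁ E₂ : Type*}
    [NormedAddCommGroup E₁] [NormedSpace ℝ E₁]
    [NormedAddCommGroup E₂] [NormedSpace ℝ E₂] [CompleteSpace E₂]
    (ε : ℝ) (hε : 0 ≤ ε) (p : ℝ) (hp0 : 0 ≤ p) (hp1 : p < 1)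
    (f : E₁ → E₂)
    (hf : ∀ x y : E₁, ‖f (x + y) - f x - f y‖ ≤ ε * (‖x‖ ^ p + ‖y‖ ^ p)) :
    ∃! T : E₁ → E₂,
      (∀ x y, T (x + y) = T x + T y) ∧
      (∀ x : E₁, ‖f x - T x‖ ≤ (2 * ε / (2 - 2 ^ p)) * ‖x‖ ^ p) ∧
      (∀ x : E₁, Tendsto (fun n : ℕ => ((2:ℝ)^n)⁻¹ • f ((2:ℝ)^n • x)) atTop (nhds (T x))) :=
  rassias_stability_general ε p hp1 f hf
end

section
/- (Gajda's extension for p > 1) Let E₁, E₂ be real normed spaces with E₂ complete, ε ≥ 0, and p > 1. If f : E₁ → E₂ satisfies ‖f(x+y) − f(x) − f(y)‖ ≤ ε(‖x‖^p + ‖y‖^p) for all x, y ∈ E₁, then there exists a unique additive map T : E₁ → E₂ with ‖f(x) − T(x)‖ ≤ (2ε/(2^p − 2))‖x‖^p for all x ∈ E₁, and T(x) = lim_{n→∞} 2^n f(2^{-n} x). -/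
open Filter Topology

/-- Gajda's extension of the Hyers–Ulam–Rassias stability for `p > 1`. -/
theorem gajda_stability {E₁ E₂ : Type*}
    [NormedAddCommGroup E₁] [NormedSpace ℝ E₁]
    [NormedAddCommGroup E₂] [NormedSpace ℝ E₂] [CompleteSpace E₂]
    (ε : ℝ) (hε : 0 ≤ ε) (p : ℝ) (hp : 1 < p)
    (f : E₁ → E₂)
    (hf : ∀ x y : E₁, ‖f (x + y) - f x - f y‖ ≤ ε * (‖x‖ ^ p + ‖y‖ ^ p)) :
    ∃! T : E₁ → E₂,
      (∀ x y, T (x + y) = T x + T y) ∧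
      (∀ x : E₁, ‖f x - T x‖ ≤ (2 * ε / (2 ^ p - 2)) * ‖x‖ ^ p) ∧
      (∀ x : E₁, Tendsto (fun n : ℕ => (2:ℝ)^n • f (((2:ℝ)^n)⁻¹ • x)) atTop (nhds (T x))) := by
  set r : ℝ := (2:ℝ) ^ (1 - p) with hr_def
  have h20 : (0:ℝ) < 2 := two_pos
  have hr0 : 0 < r := Real.rpow_pos_of_pos h20 _
  have hr1 : r < 1 := Real.rpow_lt_one_of_one_lt_of_neg one_lt_two (by linarith)
  set u : E₁ → ℕ → E₂ := fun x n => (2:ℝ)^n • f (((2:ℝ)^n)⁻¹ • x) with hu_def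
  -- scaling identity
  have hscale : ∀ (n : ℕ) (v : E₁), ‖((2:ℝ)^n)⁻¹ • v‖ ^ p = r ^ n / (2:ℝ)^n * ‖v‖ ^ p := by
    intro n v
    have hn0 : (0:ℝ) ≤ ((2:ℝ)^n)⁻¹ := by positivity
    rw [norm_smul, Real.norm_eq_abs, abs_of_nonneg hn0,
      Real.mul_rpow hn0 (norm_nonneg v), Real.inv_rpow (by positivity)]
    congr 1
    rw [hr_def, ← Real.rpow_natCast ((2:ℝ) ^ (1-p)) n, ← Real.rpow_natCast (2:ℝ) n,
      ← Real.rpow_mul (le_of_lt h20), ← Real.rpow_mul (le_of_lt h20),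
      ← Real.rpow_neg (le_of_lt h20), div_eq_mul_inv, ← Real.rpow_neg (le_of_lt h20),
      ← Real.rpow_add h20]
    ring_nf
  -- key geometric bound
  have hkey : ∀ (x : E₁) (n : ℕ), dist (u x n) (u x (n+1)) ≤ (ε * ‖x‖ ^ p * r) * r ^ n := by
    intro x n
    set z : E₁ := ((2:ℝ)^(n+1))⁻¹ • x with hz
    have hzz : ((2:ℝ)^n)⁻¹ • x = z + z := by
      rw [hz, ← add_smul]
      congr 1
      rw [← two_mul, pow_succ, mul_inv]
      field_simp
    have h1 : u x n - u x (n+1) = (2:ℝ)^n • (f (z + z) - f z - f z) := by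
      have e1 : u x n = (2:ℝ)^n • f (z + z) := by simp only [hu_def, hzz]
      have e2 : u x (n+1) = (2:ℝ)^n • ((2:ℝ) • f z) := by
        simp only [hu_def]
        rw [← hz, pow_succ, mul_smul]
      rw [e1, e2]; module
    rw [dist_eq_norm, h1, norm_smul, Real.norm_eq_abs, abs_of_nonneg (by positivity)]
    have h2 := hf z z
    have h3 : ‖z‖ ^ p = r ^ (n+1) / (2:ℝ)^(n+1) * ‖x‖ ^ p := hscale (n+1) x
    calc (2:ℝ)^n * ‖f (z + z) - f z - f z‖ ≤ (2:ℝ)^n * (ε * (‖z‖ ^ p + ‖z‖ ^ p)) := by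
          apply mul_le_mul_of_nonneg_left h2 (by positivity)
      _ = (ε * ‖x‖ ^ p * r) * r ^ n := by
          rw [h3, pow_succ]
          field_simp
          ring
  have hconv : ∀ x : E₁, ∃ L, Tendsto (u x) atTop (𝓝 L) := fun x =>
    cauchySeq_tendsto_of_complete (cauchySeq_of_le_geometric r _ hr1 (hkey x))
  choose T hT using hconv
  have h2p : r * (2:ℝ) ^ p = 2 := by
    rw [hr_def, ← Real.rpow_add h20]
    norm_num
  have h2p_pos : (0:ℝ) < (2:ℝ) ^ p - 2 := by
    have h := Real.rpow_lt_rpow_of_exponent_lt (x := (2:ℝ)) one_lt_two hp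
    rw [Real.rpow_one] at h
    linarith
  have hbound : ∀ x : E₁, ‖f x - T x‖ ≤ (2 * ε / (2 ^ p - 2)) * ‖x‖ ^ p := by
    intro x
    have h0 : u x 0 = f x := by simp [hu_def]
    have := dist_le_of_le_geometric_of_tendsto₀ r (ε * ‖x‖ ^ p * r) hr1 (hkey x) (hT x)
    rw [h0, dist_eq_norm] at this
    refine this.trans (le_of_eq ?_)
    have h1r : (0:ℝ) < 1 - r := by linarith
    field_simp
    linear_combination (ε * ‖x‖ ^ p) * h2p
  have hadd : ∀ x y : E₁, T (x + y) = T x + T y := by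
    intro x y
    have hb : Tendsto (fun n : ℕ => (ε * (‖x‖ ^ p + ‖y‖ ^ p)) * r ^ n) atTop (𝓝 0) := by
      simpa using (tendsto_pow_atTop_nhds_zero_of_lt_one hr0.le hr1).const_mul
        (ε * (‖x‖ ^ p + ‖y‖ ^ p))
    have key : Tendsto (fun n => u (x+y) n - u x n - u y n) atTop (𝓝 0) := by
      refine squeeze_zero_norm (fun n => ?_) hb
      · have e : u (x+y) n - u x n - u y n
            = (2:ℝ)^n • (f (((2:ℝ)^n)⁻¹ • x + ((2:ℝ)^n)⁻¹ • y)
                - f (((2:ℝ)^n)⁻¹ • x) - f (((2:ℝ)^n)⁻¹ • y)) := by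
          simp only [hu_def, smul_add, smul_sub]
        rw [e, norm_smul, Real.norm_eq_abs, abs_of_nonneg (by positivity)]
        calc (2:ℝ)^n * ‖_‖ ≤ (2:ℝ)^n * (ε * (‖((2:ℝ)^n)⁻¹ • x‖ ^ p + ‖((2:ℝ)^n)⁻¹ • y‖ ^ p)) :=
              mul_le_mul_of_nonneg_left (hf _ _) (by positivity)
          _ = (ε * (‖x‖ ^ p + ‖y‖ ^ p)) * r ^ n := by
              rw [hscale n x, hscale n y]
              field_simp
    have key2 : Tendsto (fun n => u (x+y) n - u x n - u y n) atTop
        (𝓝 (T (x+y) - T x - T y)) := ((hT (x+y)).sub (hT x)).sub (hT y)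
    have := tendsto_nhds_unique key2 key
    have h'' : T (x+y) - (T x + T y) = 0 := by rw [← this]; abel
    exact sub_eq_zero.mp h'' 
  refine ⟨T, ⟨hadd, hbound, hT⟩, ?_⟩
  rintro T' ⟨-, -, hT'⟩
  funext x
  exact tendsto_nhds_unique (hT' x) (hT x)
end

section
/- Let A be a J*-algebra, r > 1 a real number, and T : A → A a mapping with T(r x) = r T(x) for all x ∈ A. Suppose there is a function φ : A × A × A → [0,∞) with lim_{n→∞} r^{-n} φ(r^n x, r^n y, r^n z) = 0 for all x, y, z, and ‖T(λx + y + z z* z) − λT(x) − T(y) − T(z)T(z)*T(z)‖ ≤ φ(x,y,z) for all λ ∈ ℂ and all x, y, z ∈ A. Then T is a J*-homomorphism, i.e., T is ℂ-linear and T(z z* z) = T(z) T(z)* T(z) for all z ∈ A. -/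
open Filter Topology

/-- The Jordan triple cube `x ↦ x x* x` inside a subspace closed under it. -/
def jcube {𝓐 : Type*} [NormedRing 𝓐] [StarRing 𝓐] [NormedAlgebra ℂ 𝓐]
    (S : Submodule ℂ 𝓐) (hS : ∀ a ∈ S, a * star a * a ∈ S) (x : S) : S :=
  ⟨(x : 𝓐) * star (x : 𝓐) * (x : 𝓐), hS x x.2⟩

/-- Proposition 2.1: such a `T` is a J*-homomorphism. -/
theorem prop21 {𝓐 : Type*}
    [NormedRing 𝓐] [StarRing 𝓐] [CStarRing 𝓐] [NormedAlgebra ℂ 𝓐] [StarModule ℂ 𝓐]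
    [CompleteSpace 𝓐]
    (A : Submodule ℂ 𝓐) (hA : IsClosed (A : Set 𝓐)) (hAc : ∀ a ∈ A, a * star a * a ∈ A)
    (r : ℝ) (hr : 1 < r)
    (T : A → A) (hT : ∀ x : A, T ((r : ℂ) • x) = (r : ℂ) • T x)
    (φ : A → A → A → ℝ) (hφ : ∀ x y z, 0 ≤ φ x y z)
    (hlim : ∀ x y z : A,
      Tendsto (fun n : ℕ => φ (((r:ℂ))^n • x) (((r:ℂ))^n • y) (((r:ℂ))^n • z) / r^n)
        atTop (nhds 0))
    (hineq : ∀ (l : ℂ) (x y z : A),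
      ‖((T (l • x + y + jcube A hAc z) : 𝓐) - l • (T x : 𝓐) - (T y : 𝓐)
        - (T z : 𝓐) * star (T z : 𝓐) * (T z : 𝓐))‖ ≤ φ x y z) :
    (∀ x y, T (x + y) = T x + T y) ∧
    (∀ (c : ℂ) (x : A), T (c • x) = c • T x) ∧
    (∀ z : A, (T (jcube A hAc z) : 𝓐) = (T z : 𝓐) * star (T z : 𝓐) * (T z : 𝓐)) := by
  have hr0 : (0:ℝ) < r := lt_trans one_pos hr
  have hrn : ∀ n : ℕ, (0:ℝ) < r ^ n := fun n => pow_pos hr0 n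
  have hnorm : ∀ n : ℕ, ‖((r:ℂ)) ^ n‖ = r ^ n := by
    intro n
    rw [norm_pow, Complex.norm_real, Real.norm_eq_abs, abs_of_pos hr0]
  have hT0 : T 0 = 0 := by
    have h := hT 0
    rw [smul_zero] at h
    have h2 : ((r:ℂ) - 1) • T 0 = 0 := by
      rw [sub_smul, one_smul, ← h, sub_self]
    rcases smul_eq_zero.mp h2 with h3 | h3
    · exact absurd h3 (sub_ne_zero.mpr (by exact_mod_cast hr.ne'))
    · exact h3
  have hTpow : ∀ (n : ℕ) (x : A), T (((r:ℂ)) ^ n • x) = ((r:ℂ)) ^ n • T x := by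
    intro n
    induction n with
    | zero => intro x; simp
    | succ n ih =>
      intro x
      rw [pow_succ, mul_smul, mul_smul, ih, hT]
  -- main linearity claim
  have key : ∀ (l : ℂ) (x y : A), (T (l • x + y) : 𝓐) = l • (T x : 𝓐) + (T y : 𝓐) := by
    intro l x y
    have hj0 : jcube A hAc (0 : A) = 0 := by
      apply Subtype.ext; simp [jcube]
    have hb : ∀ n : ℕ,
        ‖(T (l • x + y) : 𝓐) - l • (T x : 𝓐) - (T y : 𝓐)‖ ≤
          φ (((r:ℂ))^n • x) (((r:ℂ))^n • y) (((r:ℂ))^n • 0) / r ^ n := by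
      intro n
      rw [smul_zero]
      have h := hineq l (((r:ℂ))^n • x) (((r:ℂ))^n • y) (0:A)
      rw [hj0, add_zero] at h
      have harg : l • (((r:ℂ))^n • x) + ((r:ℂ))^n • y = ((r:ℂ))^n • (l • x + y) := by
        rw [smul_add, smul_comm]
      rw [harg, hTpow, hTpow, hTpow, hT0] at h
      have hres : ((((r:ℂ))^n • T (l • x + y) : A) : 𝓐) - l • ((((r:ℂ))^n • T x : A) : 𝓐)
          - ((((r:ℂ))^n • T y : A) : 𝓐) - ((0 : A) : 𝓐) * star ((0:A) : 𝓐) * ((0:A) : 𝓐)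
          = ((r:ℂ))^n • ((T (l • x + y) : 𝓐) - l • (T x : 𝓐) - (T y : 𝓐)) := by
        push_cast
        rw [smul_comm l]
        simp [smul_sub]
      rw [hres, norm_smul, hnorm] at h
      rw [le_div_iff₀ (hrn n), mul_comm]
      exact h
    have hle : ‖(T (l • x + y) : 𝓐) - l • (T x : 𝓐) - (T y : 𝓐)‖ ≤ 0 :=
      ge_of_tendsto (hlim x y 0) (Eventually.of_forall hb)
    have := norm_le_zero_iff.mp hle
    have h4 : (T (l • x + y) : 𝓐) - (l • (T x : 𝓐) + (T y : 𝓐)) = 0 := by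
      rw [sub_add_eq_sub_sub]; exact this
    exact sub_eq_zero.mp h4
  refine ⟨?_, ?_, ?_⟩
  · intro x y
    apply Subtype.ext
    have := key 1 x y
    rw [one_smul] at this
    simpa using this
  · intro c x
    apply Subtype.ext
    have := key c x 0
    rw [add_zero, hT0] at this
    simpa using this
  · intro z
    have hcube : ∀ n : ℕ, jcube A hAc (((r:ℂ))^n • z) = ((r:ℂ))^(3*n) • jcube A hAc z := by
      intro n
      apply Subtype.ext
      push_cast [jcube]
      rw [star_smul]
      have hst : star (((r:ℂ))^n) = ((r:ℂ))^n := by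
        rw [star_pow, Complex.star_def, Complex.conj_ofReal]
      rw [hst]
      simp only [smul_mul_assoc, mul_smul_comm, smul_smul]
      rw [show 3*n = n+(n+n) by ring, pow_add, pow_add]
    have hb : ∀ n : ℕ,
        ‖(T (jcube A hAc z) : 𝓐) - (T z : 𝓐) * star (T z : 𝓐) * (T z : 𝓐)‖ ≤
          φ (((r:ℂ))^n • 0) (((r:ℂ))^n • 0) (((r:ℂ))^n • z) / r ^ n := by
      intro n
      rw [smul_zero]
      have h := hineq 0 (0:A) (0:A) (((r:ℂ))^n • z)
      rw [zero_smul, zero_add, zero_add, hT0, hcube, hTpow, hTpow] at h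
      have hres : ((((r:ℂ))^(3*n) • T (jcube A hAc z) : A) : 𝓐)
          - (0:ℂ) • (((0:A)) : 𝓐) - (((0:A)) : 𝓐)
          - ((((r:ℂ))^n • T z : A) : 𝓐) * star ((((r:ℂ))^n • T z : A) : 𝓐) * ((((r:ℂ))^n • T z : A) : 𝓐)
          = ((r:ℂ))^(3*n) • ((T (jcube A hAc z) : 𝓐) - (T z : 𝓐) * star (T z : 𝓐) * (T z : 𝓐)) := by
        push_cast
        rw [star_smul]
        have hst : star (((r:ℂ))^n) = ((r:ℂ))^n := by
          rw [star_pow, Complex.star_def, Complex.conj_ofReal]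
        rw [hst]
        simp only [smul_mul_assoc, mul_smul_comm, smul_smul, smul_sub, zero_smul, sub_zero]
        rw [show 3*n = n+(n+n) by ring, pow_add, pow_add]
      rw [hres, norm_smul, hnorm] at h
      have hmono : r ^ n * ‖(T (jcube A hAc z) : 𝓐) - (T z : 𝓐) * star (T z : 𝓐) * (T z : 𝓐)‖
          ≤ r ^ (3*n) * ‖(T (jcube A hAc z) : 𝓐) - (T z : 𝓐) * star (T z : 𝓐) * (T z : 𝓐)‖ :=
        mul_le_mul_of_nonneg_right (pow_le_pow_right₀ hr.le (by omega)) (norm_nonneg _)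
      rw [le_div_iff₀ (hrn n), mul_comm]
      exact le_trans hmono h
    have hle : ‖(T (jcube A hAc z) : 𝓐) - (T z : 𝓐) * star (T z : 𝓐) * (T z : 𝓐)‖ ≤ 0 :=
      ge_of_tendsto (hlim 0 0 z) (Eventually.of_forall hb)
    exact sub_eq_zero.mp (norm_le_zero_iff.mp hle)
end

section
/- Under the hypotheses of the previous setting (T(rx) = rT(x) for some r > 1 and the φ-bounded inequality with vanishing r^{-n}-limit), T satisfies T(0) = 0 and T(z z* z) = T(z) T(z)* T(z) for all z ∈ A. -/
open Filter Topology

/-- Under the hypotheses of Proposition 2.1, `T 0 = 0` and `T` preserves the triple cube. -/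
theorem prop21_cube {𝓐 : Type*}
    [NormedRing 𝓐] [StarRing 𝓐] [CStarRing 𝓐] [NormedAlgebra ℂ 𝓐] [StarModule ℂ 𝓐]
    [CompleteSpace 𝓐]
    (A : Submodule ℂ 𝓐) (hA : IsClosed (A : Set 𝓐)) (hAc : ∀ a ∈ A, a * star a * a ∈ A)
    (r : ℝ) (hr : 1 < r)
    (T : A → A) (hT : ∀ x : A, T ((r : ℂ) • x) = (r : ℂ) • T x)
    (φ : A → A → A → ℝ) (hφ : ∀ x y z, 0 ≤ φ x y z)
    (hlim : ∀ x y z : A,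
      Tendsto (fun n : ℕ => φ (((r:ℂ))^n • x) (((r:ℂ))^n • y) (((r:ℂ))^n • z) / r^n)
        atTop (nhds 0))
    (hineq : ∀ (l : ℂ) (x y z : A),
      ‖((T (l • x + y + jcube A hAc z) : 𝓐) - l • (T x : 𝓐) - (T y : 𝓐)
        - (T z : 𝓐) * star (T z : 𝓐) * (T z : 𝓐))‖ ≤ φ x y z) :
    T 0 = 0 ∧
    (∀ z : A, (T (jcube A hAc z) : 𝓐) = (T z : 𝓐) * star (T z : 𝓐) * (T z : 𝓐)) := by
  have hr0 : (0:ℝ) < r := lt_trans one_pos hr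
  have hrne : ((r:ℂ) - 1) ≠ 0 := by
    rw [sub_ne_zero]
    exact_mod_cast ne_of_gt hr
  have hT0 : T 0 = 0 := by
    have h := hT 0
    rw [smul_zero] at h
    have h2 : ((r:ℂ) - 1) • T 0 = 0 := by
      rw [sub_smul, one_smul, ← h, sub_self]
    have := congrArg (fun v => ((r:ℂ) - 1)⁻¹ • v) h2
    simpa [inv_smul_smul₀ hrne] using this
  refine ⟨hT0, fun z => ?_⟩
  have hTn : ∀ (n : ℕ) (x : A), T ((r:ℂ)^n • x) = (r:ℂ)^n • T x := by
    intro n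
    induction n with
    | zero => intro x; simp
    | succ n ih =>
        intro x
        have : (r:ℂ)^(n+1) • x = (r:ℂ)^n • ((r:ℂ) • x) := by
          rw [smul_smul, ← pow_succ]
        rw [this, ih, hT, smul_smul, ← pow_succ]
  set D : 𝓐 := (T (jcube A hAc z) : 𝓐) - (T z : 𝓐) * star (T z : 𝓐) * (T z : 𝓐) with hD
  have hc : ∀ n : ℕ, (r:ℂ)^n * (r:ℂ)^n * (r:ℂ)^n = (r:ℂ)^(3*n) := by
    intro n; ring
  have key : ∀ n : ℕ, ‖D‖ ≤ φ 0 0 ((r:ℂ)^n • z) / r^n := by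
    intro n
    have hj : jcube A hAc ((r:ℂ)^n • z) = ((r:ℂ)^(3*n)) • jcube A hAc z := by
      apply Subtype.ext
      show ((r:ℂ)^n • (z:𝓐)) * star ((r:ℂ)^n • (z:𝓐)) * ((r:ℂ)^n • (z:𝓐))
          = (r:ℂ)^(3*n) • ((z:𝓐) * star (z:𝓐) * (z:𝓐))
      rw [star_smul]
      simp only [Complex.star_def, map_pow, Complex.conj_ofReal,
        smul_mul_assoc, mul_smul_comm, smul_smul]
      congr 1
      ring
    have hcube : (T ((r:ℂ)^n • z) : 𝓐) * star (T ((r:ℂ)^n • z) : 𝓐) * (T ((r:ℂ)^n • z) : 𝓐)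
        = (r:ℂ)^(3*n) • ((T z : 𝓐) * star (T z : 𝓐) * (T z : 𝓐)) := by
      rw [hTn n z]
      show ((r:ℂ)^n • (T z : 𝓐)) * star ((r:ℂ)^n • (T z : 𝓐)) * ((r:ℂ)^n • (T z : 𝓐))
          = (r:ℂ)^(3*n) • ((T z : 𝓐) * star (T z : 𝓐) * (T z : 𝓐))
      rw [star_smul]
      simp only [Complex.star_def, map_pow, Complex.conj_ofReal,
        smul_mul_assoc, mul_smul_comm, smul_smul]
      congr 1
      ring
    have h := hineq 0 0 0 ((r:ℂ)^n • z)
    rw [zero_smul, zero_add, zero_add, zero_smul, sub_zero, hT0, hj, hTn (3*n),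
      hcube] at h
    simp only [Submodule.coe_smul, Submodule.coe_zero, sub_zero] at h
    rw [← smul_sub, ← hD, norm_smul, norm_pow, Complex.norm_real,
      Real.norm_eq_abs, abs_of_pos hr0] at h
    have hpow : (0:ℝ) < r^(3*n) := pow_pos hr0 _
    have h1 : ‖D‖ ≤ φ 0 0 ((r:ℂ)^n • z) / r^(3*n) := by
      rw [le_div_iff₀ hpow, mul_comm]
      exact h
    refine h1.trans ?_
    gcongr
    · exact hφ _ _ _
    · exact le_of_lt hr
    · omega
  have hlim' : Tendsto (fun n : ℕ => φ 0 0 ((r:ℂ)^n • z) / r^n) atTop (nhds 0) := by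
    have := hlim 0 0 z
    simpa using this
  have hle : ‖D‖ ≤ 0 := ge_of_tendsto' hlim' key
  have : D = 0 := norm_le_zero_iff.mp hle
  exact sub_eq_zero.mp this
end

section
/- Let A and B be J*-algebras and h : A → B a mapping with h(0) = 0. Suppose φ : A × A × A → [0,∞) satisfies φ̃(x,y,z) := (1/2) ∑_{n=0}^∞ 2^{-n} φ(2^n x, 2^n y, 2^n z) < ∞ and ‖h(μx + μy + z z* z) − μh(x) − μh(y) − h(z)h(z)*h(z)‖ ≤ φ(x,y,z) for all μ ∈ ℂ with |μ| = 1 and all x, y, z ∈ A. Then there exists a unique J*-homomorphism T : A → B such that ‖h(x) − T(x)‖ ≤ φ̃(x,x,0) for all x ∈ A. -/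
/-!
Hyers' direct method. With `μ = 1` and `z = 0` the hypothesis says that `h` is approximately
additive, so `2⁻ⁿ h(2ⁿ x)` is a Cauchy sequence whose increments are bounded by the terms of
the series `φ̃(x, x, 0)`; its limit `T` is the required map. Passing to the limit in the hypothesis
makes `T` additive and `S¹`-homogeneous, which forces `ℂ`-linearity because every complex number
of modulus at most `2` is a sum of two unimodular ones. The triple product is homogeneous of degree `3`
on both sides, so it passes to the limit along the subsequence `3n`. Any other such map `T'` has
`T' x = 2⁻ⁿ T'(2ⁿ x)`, which lies within a tail of the series `φ̃(x, x, 0)` of `2⁻ⁿ h(2ⁿ x)`;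
hence `T' = T`.
-/

open Filter Topology

lemma Complex.exists_norm_eq_one_add_eq {t : ℂ} (ht : ‖t‖ ≤ 2) :
    ∃ μ ν : ℂ, ‖μ‖ = 1 ∧ ‖ν‖ = 1 ∧ μ + ν = t := by
  rcases eq_or_ne t 0 with rfl | ht0
  · exact ⟨1, -1, by simp, by simp, by ring⟩
  -- `t = u (w + w̄)` with `u = t / ‖t‖` and `w` the unit vector of real part `‖t‖ / 2`
  have ha : (‖t‖ / 2) ^ 2 ≤ 1 := pow_le_one₀ (by positivity) (by linarith)
  set w : ℂ := ⟨‖t‖ / 2, √(1 - (‖t‖ / 2) ^ 2)⟩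
  have hw : ‖w‖ = 1 := by
    rw [Complex.norm_def, Complex.normSq_mk, ← sq, ← sq, Real.sq_sqrt (by linarith)]
    simp
  set u := t / (‖t‖ : ℂ)
  have hnorm0 : (‖t‖ : ℂ) ≠ 0 := by simpa using ht0
  have hu : ‖u‖ = 1 := by simp [u, ht0]
  refine ⟨u * w, u * (starRingEnd ℂ) w, by simp [hu, hw], by simp [hu, hw], ?_⟩
  rw [← mul_add, Complex.add_conj]
  simp only [u, w]
  field_simp

lemma isLinearMap_of_map_unit_smul_add {E F : Type*} [AddCommGroup E] [Module ℂ E]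
    [AddCommGroup F] [Module ℂ F] {g : E → F}
    (hg : ∀ μ : ℂ, ‖μ‖ = 1 → ∀ x y, g (μ • x + μ • y) = μ • g x + μ • g y) :
    IsLinearMap ℂ g := by
  have hadd : ∀ x y, g (x + y) = g x + g y := by simpa using hg 1 (by simp)
  let G : E →+ F := AddMonoidHom.mk' g hadd
  have hunit : ∀ μ : ℂ, ‖μ‖ = 1 → ∀ x, g (μ • x) = μ • g x := by
    intro μ hμ x
    simpa [show g 0 = 0 from map_zero G] using hg μ hμ x 0
  have hsmall : ∀ t : ℂ, ‖t‖ ≤ 2 → ∀ x, g (t • x) = t • g x := by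
    intro t ht x
    obtain ⟨μ, ν, hμ, hν, rfl⟩ := Complex.exists_norm_eq_one_add_eq ht
    rw [add_smul, hadd, hunit μ hμ, hunit ν hν, add_smul]
  refine ⟨hadd, fun t x => ?_⟩
  obtain ⟨N, hN⟩ := exists_nat_gt ‖t‖
  have hNpos : (0 : ℝ) < N := (norm_nonneg t).trans_lt hN
  have hN0 : (N : ℂ) ≠ 0 := by exact_mod_cast hNpos.ne'
  have hsmallt : ‖t / N‖ ≤ 2 := by
    rw [norm_div, Complex.norm_natCast, div_le_iff₀ hNpos]
    linarith
  calc g (t • x) = g (N • (t / N) • x) := by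
        rw [← Nat.cast_smul_eq_nsmul ℂ, smul_smul, mul_div_cancel₀ _ hN0]
    _ = N • g ((t / N) • x) := map_nsmul G N _
    _ = N • (t / N) • g x := by rw [hsmall _ hsmallt]
    _ = t • g x := by rw [← Nat.cast_smul_eq_nsmul ℂ, smul_smul, mul_div_cancel₀ _ hN0]

section Cube

variable {R : Type*} [Ring R] [StarRing R] [Algebra ℂ R]

lemma smul_mul_star_mul_smul {c : ℂ} {y : R} (hc : star (c • y) = c • star y) :
    c • y * star (c • y) * c • y = c ^ 3 • (y * star y * y) := by
  rw [hc, smul_mul_smul_comm, smul_mul_smul_comm, ← pow_two, ← pow_succ]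

lemma smul_mul_star_mul_smul_two_pow (n : ℕ) (y : R) :
    (2 : ℂ) ^ n • y * star ((2 : ℂ) ^ n • y) * (2 : ℂ) ^ n • y
      = ((2 : ℂ) ^ n) ^ 3 • (y * star y * y) := by
  refine smul_mul_star_mul_smul ?_
  exact_mod_cast star_natCast_smul (R := ℂ) (2 ^ n) y

lemma smul_mul_star_mul_smul_inv_two_pow (n : ℕ) (y : R) :
    ((2 : ℂ) ^ n)⁻¹ • y * star (((2 : ℂ) ^ n)⁻¹ • y) * ((2 : ℂ) ^ n)⁻¹ • y
      = (((2 : ℂ) ^ n)⁻¹) ^ 3 • (y * star y * y) := by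
  refine smul_mul_star_mul_smul ?_
  exact_mod_cast star_inv_natCast_smul (R := ℂ) (2 ^ n) y

end Cube

lemma jcube_two_pow_smul {𝓐 : Type*} [NormedRing 𝓐] [StarRing 𝓐] [NormedAlgebra ℂ 𝓐]
    (S : Submodule ℂ 𝓐) (hS : ∀ a ∈ S, a * star a * a ∈ S) (n : ℕ) (z : S) :
    jcube S hS ((2 : ℂ) ^ n • z) = ((2 : ℂ) ^ n) ^ 3 • jcube S hS z :=
  Subtype.ext (smul_mul_star_mul_smul_two_pow n (z : 𝓐))

section Dyadic

variable {E F : Type*} [AddCommGroup E] [Module ℂ E] [NormedAddCommGroup F] [NormedSpace ℂ F]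

noncomputable def dyadicSeq (f : E → F) (x : E) (n : ℕ) : F := ((2 : ℂ) ^ n)⁻¹ • f ((2 : ℂ) ^ n • x)

@[simp]
lemma dyadicSeq_zero (f : E → F) (x : E) : dyadicSeq f x 0 = f x := by
  simp [dyadicSeq]

lemma norm_inv_two_pow_smul (n : ℕ) (y : F) : ‖((2 : ℂ) ^ n)⁻¹ • y‖ = ‖y‖ / 2 ^ n := by
  rw [norm_smul, norm_inv, norm_pow, Complex.norm_two, inv_mul_eq_div]

lemma dist_dyadicSeq_succ_le {f : E → F} {ψ : E → ℝ}
    (hf : ∀ x, ‖f (x + x) - f x - f x‖ ≤ ψ x) (x : E) (n : ℕ) :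
    dist (dyadicSeq f x n) (dyadicSeq f x (n + 1)) ≤ 1 / 2 * (ψ ((2 : ℂ) ^ n • x) / 2 ^ n) := by
  set a := (2 : ℂ) ^ n • x with ha
  have hdiff : dyadicSeq f x (n + 1) - dyadicSeq f x n
      = ((2 : ℂ) ^ (n + 1))⁻¹ • (f (a + a) - f a - f a) := by
    have h2 : ((2 : ℂ) ^ n)⁻¹ = ((2 : ℂ) ^ (n + 1))⁻¹ + ((2 : ℂ) ^ (n + 1))⁻¹ := by
      rw [pow_succ]; field_simp; norm_num
    simp only [dyadicSeq, pow_succ', mul_smul, two_smul, ← ha, h2, add_smul, smul_sub]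
    abel
  rw [dist_comm, dist_eq_norm, hdiff, norm_inv_two_pow_smul, pow_succ]
  calc ‖f (a + a) - f a - f a‖ / (2 ^ n * 2) ≤ ψ a / (2 ^ n * 2) := by gcongr; exact hf a
    _ = 1 / 2 * (ψ a / 2 ^ n) := by ring

lemma exists_tendsto_dyadicSeq [CompleteSpace F] {f : E → F} {ψ : E → ℝ}
    (hf : ∀ x, ‖f (x + x) - f x - f x‖ ≤ ψ x) {x : E}
    (hψ : Summable fun n : ℕ => ψ ((2 : ℂ) ^ n • x) / 2 ^ n) :
    ∃ L, Tendsto (dyadicSeq f x) atTop (𝓝 L) ∧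
      ‖f x - L‖ ≤ 1 / 2 * ∑' n : ℕ, ψ ((2 : ℂ) ^ n • x) / 2 ^ n := by
  have hd := dist_dyadicSeq_succ_le hf x
  obtain ⟨L, hL⟩ := cauchySeq_tendsto_of_complete
    (cauchySeq_of_dist_le_of_summable _ hd (hψ.mul_left _))
  refine ⟨L, hL, ?_⟩
  have hdist := dist_le_tsum_of_dist_le_of_tendsto₀ _ hd (hψ.mul_left _) hL
  rwa [dyadicSeq_zero, dist_eq_norm, tsum_mul_left] at hdist

lemma dyadicSeq_two_pow_smul_sub {f T : E → F}
    (hT : ∀ (n : ℕ) x, T ((2 : ℂ) ^ n • x) = (2 : ℂ) ^ n • T x) (x : E) (n : ℕ) :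
    dyadicSeq f x n - T x = ((2 : ℂ) ^ n)⁻¹ • (f ((2 : ℂ) ^ n • x) - T ((2 : ℂ) ^ n • x)) := by
  rw [hT, smul_sub, smul_smul, inv_mul_cancel₀ (by norm_num), one_smul, dyadicSeq]

lemma map_unit_smul_add_of_tendsto_dyadicSeq {f T : E → F}
    (hT : ∀ x, Tendsto (dyadicSeq f x) atTop (𝓝 (T x))) {μ : ℂ} {ψ : E → E → ℝ}
    (hf : ∀ x y, ‖f (μ • x + μ • y) - μ • f x - μ • f y‖ ≤ ψ x y) {x y : E}
    (hψ : Tendsto (fun n : ℕ => ψ ((2 : ℂ) ^ n • x) ((2 : ℂ) ^ n • y) / 2 ^ n) atTop (𝓝 0)) :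
    T (μ • x + μ • y) = μ • T x + μ • T y := by
  refine tendsto_nhds_unique (hT _) <| (((hT x).const_smul μ).add ((hT y).const_smul μ)).congr_dist
    (squeeze_zero (fun _ => dist_nonneg) (fun n => ?_) hψ)
  have hscale : (2 : ℂ) ^ n • (μ • x + μ • y) = μ • (2 : ℂ) ^ n • x + μ • (2 : ℂ) ^ n • y := by
    rw [smul_add, smul_comm _ μ x, smul_comm _ μ y]
  have hdiff : dyadicSeq f (μ • x + μ • y) n - (μ • dyadicSeq f x n + μ • dyadicSeq f y n)
      = ((2 : ℂ) ^ n)⁻¹ • (f (μ • (2 : ℂ) ^ n • x + μ • (2 : ℂ) ^ n • y)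
          - μ • f ((2 : ℂ) ^ n • x) - μ • f ((2 : ℂ) ^ n • y)) := by
    rw [dyadicSeq, dyadicSeq, dyadicSeq, hscale, smul_sub, smul_sub, smul_comm _ μ,
      smul_comm _ μ]
    abel
  rw [dist_comm, dist_eq_norm, hdiff, norm_inv_two_pow_smul]
  gcongr
  exact hf _ _

lemma map_homogeneous_of_tendsto_dyadicSeq {f T : E → F}
    (hT : ∀ x, Tendsto (dyadicSeq f x) atTop (𝓝 (T x))) {P : E → E} {Q : F → F} {k : ℕ}
    (hk : k ≠ 0) (hP : ∀ (n : ℕ) z, P ((2 : ℂ) ^ n • z) = ((2 : ℂ) ^ n) ^ k • P z)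
    (hQ : ∀ (n : ℕ) y, Q (((2 : ℂ) ^ n)⁻¹ • y) = (((2 : ℂ) ^ n)⁻¹) ^ k • Q y)
    (hQc : Continuous Q) {ψ : E → ℝ} (hf : ∀ z, ‖f (P z) - Q (f z)‖ ≤ ψ z) {z : E}
    (hψ : Tendsto (fun n : ℕ => ψ ((2 : ℂ) ^ n • z) / 2 ^ n) atTop (𝓝 0)) :
    T (P z) = Q (T z) := by
  have hsub : Tendsto (fun n => k * n) atTop atTop :=
    tendsto_id.const_mul_atTop' (Nat.pos_of_ne_zero hk)
  refine tendsto_nhds_unique ((hT (P z)).comp hsub) <| ((hQc.tendsto _).comp (hT z)).congr_dist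
    (squeeze_zero (fun _ => dist_nonneg) (fun n => ?_) hψ)
  set a := (2 : ℂ) ^ n • z
  have hdiff : dyadicSeq f (P z) (k * n) - Q (dyadicSeq f z n)
      = ((2 : ℂ) ^ (k * n))⁻¹ • (f (P a) - Q (f a)) := by
    rw [dyadicSeq, dyadicSeq, hQ, hP, mul_comm k n, pow_mul, inv_pow, smul_sub]
  have hψa : 0 ≤ ψ a := (norm_nonneg _).trans (hf a)
  rw [Function.comp_apply, Function.comp_apply, dist_comm, dist_eq_norm, hdiff,
    norm_inv_two_pow_smul]
  calc ‖f (P a) - Q (f a)‖ / 2 ^ (k * n) ≤ ψ a / 2 ^ (k * n) := by gcongr; exact hf a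
    _ ≤ ψ a / 2 ^ n := by
      gcongr
      · norm_num
      · exact Nat.le_mul_of_pos_left n (Nat.pos_of_ne_zero hk)

lemma tendsto_dyadicSeq_of_norm_sub_le {f T : E → F}
    (hT : ∀ (n : ℕ) x, T ((2 : ℂ) ^ n • x) = (2 : ℂ) ^ n • T x) {Φ : E → ℝ}
    (hf : ∀ x, ‖f x - T x‖ ≤ Φ x) {x : E}
    (hΦ : Tendsto (fun n : ℕ => Φ ((2 : ℂ) ^ n • x) / 2 ^ n) atTop (𝓝 0)) :
    Tendsto (dyadicSeq f x) atTop (𝓝 (T x)) := by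
  refine tendsto_iff_dist_tendsto_zero.2 (squeeze_zero (fun _ => dist_nonneg) (fun n => ?_) hΦ)
  rw [dist_eq_norm, dyadicSeq_two_pow_smul_sub hT, norm_inv_two_pow_smul]
  gcongr
  exact hf _

end Dyadic

lemma tendsto_tsum_two_pow_smul_div {E : Type*} [AddCommGroup E] [Module ℂ E] (ψ : E → ℝ)
    (x : E) :
    Tendsto (fun n : ℕ => (∑' m : ℕ, ψ ((2 : ℂ) ^ m • (2 : ℂ) ^ n • x) / 2 ^ m) / 2 ^ n)
      atTop (𝓝 0) := by
  have htail := tendsto_sum_nat_add fun m => ψ ((2 : ℂ) ^ m • x) / 2 ^ m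
  refine htail.congr fun n => ?_
  rw [← tsum_div_const]
  refine tsum_congr fun m => ?_
  rw [smul_smul, ← pow_add, div_div, ← pow_add]

theorem stability_jstar_hom_general
    {𝓐 𝓑 : Type*}
    [NormedRing 𝓐] [StarRing 𝓐] [NormedAlgebra ℂ 𝓐]
    [NormedRing 𝓑] [StarRing 𝓑] [CStarRing 𝓑] [NormedAlgebra ℂ 𝓑]
    [CompleteSpace 𝓑]
    (A : Submodule ℂ 𝓐) (hAc : ∀ a ∈ A, a * star a * a ∈ A)
    (B : Submodule ℂ 𝓑) (hB : IsClosed (B : Set 𝓑))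
    (h : A → B) (h0 : h 0 = 0)
    (φ : A → A → A → ℝ)
    (hsum : ∀ x y z : A,
      Summable fun n : ℕ => φ ((2:ℂ)^n • x) ((2:ℂ)^n • y) ((2:ℂ)^n • z) / 2^n)
    (hineq : ∀ (μ : ℂ), ‖μ‖ = 1 → ∀ x y z : A,
      ‖((h (μ • x + μ • y + jcube A hAc z) : 𝓑)
        - μ • (h x : 𝓑) - μ • (h y : 𝓑)
        - (h z : 𝓑) * star (h z : 𝓑) * (h z : 𝓑))‖ ≤ φ x y z) :
    ∃! T : A → B,
      (∀ x y, T (x + y) = T x + T y) ∧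
      (∀ (c : ℂ) (x : A), T (c • x) = c • T x) ∧
      (∀ z : A, (T (jcube A hAc z) : 𝓑) = (T z : 𝓑) * star (T z : 𝓑) * (T z : 𝓑)) ∧
      (∀ x : A, ‖(h x : 𝓑) - (T x : 𝓑)‖
        ≤ (1/2) * ∑' n : ℕ, φ ((2:ℂ)^n • x) ((2:ℂ)^n • x) 0 / 2^n) := by
  have hjcube0 : jcube A hAc 0 = 0 := Subtype.ext (by simp [jcube])
  have hunit_add : ∀ μ : ℂ, ‖μ‖ = 1 → ∀ x y : A,
      ‖(h (μ • x + μ • y) : 𝓑) - μ • (h x : 𝓑) - μ • (h y : 𝓑)‖ ≤ φ x y 0 := fun μ hμ x y => by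
    simpa [hjcube0, h0] using hineq μ hμ x y 0
  have hcube : ∀ z : A, ‖(h (jcube A hAc z) : 𝓑) - (h z : 𝓑) * star (h z : 𝓑) * (h z : 𝓑)‖
      ≤ φ 0 0 z := fun z => by simpa [h0] using hineq 1 (by simp) 0 0 z
  have hsum₂ : ∀ x y : A, Summable fun n : ℕ => φ ((2:ℂ)^n • x) ((2:ℂ)^n • y) 0 / 2^n := by
    simpa using fun x y => hsum x y 0
  have hdouble : ∀ x : A, ‖(h (x + x) : 𝓑) - h x - h x‖ ≤ φ x x 0 := fun x => by
    simpa using hunit_add 1 (by simp) x x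
  choose T hT hTh using fun x =>
    exists_tendsto_dyadicSeq (f := fun x => (h x : 𝓑)) hdouble (hsum₂ x x)
  have hlin : IsLinearMap ℂ T := isLinearMap_of_map_unit_smul_add fun μ hμ x y =>
    map_unit_smul_add_of_tendsto_dyadicSeq hT (hunit_add μ hμ) (hsum₂ x y).tendsto_atTop_zero
  have hcont : Continuous fun y : 𝓑 => y * star y * y := by fun_prop
  have hTcube : ∀ z, T (jcube A hAc z) = T z * star (T z) * T z := fun z =>
    map_homogeneous_of_tendsto_dyadicSeq hT three_ne_zero (jcube_two_pow_smul A hAc)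
      smul_mul_star_mul_smul_inv_two_pow hcont hcube
      (by simpa using (hsum 0 0 z).tendsto_atTop_zero)
  have hTB : ∀ x, T x ∈ B := fun x =>
    hB.mem_of_tendsto (hT x) (Eventually.of_forall fun n => B.smul_mem _ (h _).2)
  refine ⟨fun x => ⟨T x, hTB x⟩, ⟨fun x y => Subtype.ext (hlin.map_add x y),
    fun c x => Subtype.ext (hlin.map_smul c x), hTcube, hTh⟩, ?_⟩
  rintro T' ⟨-, hT'smul, -, hT'h⟩
  funext x
  refine Subtype.ext (tendsto_nhds_unique (tendsto_dyadicSeq_of_norm_sub_le ?_ hT'h ?_) (hT x))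
  · intro n x
    simp [hT'smul]
  · simpa only [mul_div_assoc, mul_zero] using
      (tendsto_tsum_two_pow_smul_div (fun a => φ a a 0) x).const_mul (1 / 2)

/-- Stability of J*-homomorphisms (Theorem 2.2). -/
theorem stability_jstar_hom
    {𝓐 𝓑 : Type*}
    [NormedRing 𝓐] [StarRing 𝓐] [CStarRing 𝓐] [NormedAlgebra ℂ 𝓐] [StarModule ℂ 𝓐]
    [CompleteSpace 𝓐]
    [NormedRing 𝓑] [StarRing 𝓑] [CStarRing 𝓑] [NormedAlgebra ℂ 𝓑] [StarModule ℂ 𝓑]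
    [CompleteSpace 𝓑]
    (A : Submodule ℂ 𝓐) (hA : IsClosed (A : Set 𝓐)) (hAc : ∀ a ∈ A, a * star a * a ∈ A)
    (B : Submodule ℂ 𝓑) (hB : IsClosed (B : Set 𝓑)) (hBc : ∀ b ∈ B, b * star b * b ∈ B)
    (h : A → B) (h0 : h 0 = 0)
    (φ : A → A → A → ℝ) (hφ : ∀ x y z, 0 ≤ φ x y z)
    (hsum : ∀ x y z : A,
      Summable fun n : ℕ => φ ((2:ℂ)^n • x) ((2:ℂ)^n • y) ((2:ℂ)^n • z) / 2^n)
    (hineq : ∀ (μ : ℂ), ‖μ‖ = 1 → ∀ x y z : A,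
      ‖((h (μ • x + μ • y + jcube A hAc z) : 𝓑)
        - μ • (h x : 𝓑) - μ • (h y : 𝓑)
        - (h z : 𝓑) * star (h z : 𝓑) * (h z : 𝓑))‖ ≤ φ x y z) :
    ∃! T : A → B,
      (∀ x y, T (x + y) = T x + T y) ∧
      (∀ (c : ℂ) (x : A), T (c • x) = c • T x) ∧
      (∀ z : A, (T (jcube A hAc z) : 𝓑) = (T z : 𝓑) * star (T z : 𝓑) * (T z : 𝓑)) ∧
      (∀ x : A, ‖(h x : 𝓑) - (T x : 𝓑)‖
        ≤ (1/2) * ∑' n : ℕ, φ ((2:ℂ)^n • x) ((2:ℂ)^n • x) 0 / 2^n) :=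
  stability_jstar_hom_general A hAc B hB h h0 φ hsum hineq
end

section
/- Let A, B be J*-algebras, h : A → B with h(0) = 0, and φ : A × A × A → [0,∞) with φ̃(x,y,z) := (1/2)∑_{n=0}^∞ 2^{-n} φ(2^n x, 2^n y, 2^n z) < ∞. Suppose ‖h(μx + μy + z z* z) − μh(x) − μh(y) − h(z)h(z)*h(z)‖ ≤ φ(x,y,z) holds for μ ∈ {1, i} and all x, y, z ∈ A, and that for each fixed x ∈ A the map t ↦ h(tx) is continuous on ℝ. Then there exists a unique J*-homomorphism T : A → B such that ‖h(x) − T(x)‖ ≤ φ̃(x,x,0) for all x ∈ A. -/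
set_option maxHeartbeats 1000000
open Filter Topology

lemma additive_limit_linear {E : Type*} [NormedAddCommGroup E] [NormedSpace ℝ E]
    (F : ℝ → E) (Fn : ℕ → ℝ → E)
    (hF : ∀ s t, F (s + t) = F s + F t)
    (hFn : ∀ n, Continuous (Fn n))
    (hlim : ∀ t, Tendsto (fun n => Fn n t) atTop (𝓝 (F t))) :
    ∀ t : ℝ, F t = t • F 1 := by
  set Fh : ℝ →+ E := AddMonoidHom.mk' F (fun s t => hF s t) with hFh
  have hrat : ∀ (q : ℚ) (t : ℝ), F ((q : ℝ) * t) = (q : ℝ) • F t := by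
    intro q t
    have := map_ratCast_smul Fh ℝ ℝ q t
    simpa [Fh, Rat.smul_def] using this
  -- Baire: F is bounded on some ball
  obtain ⟨k, c, ε, hε, hball⟩ :
      ∃ (k : ℕ) (c ε : ℝ), 0 < ε ∧ ∀ t, |t - c| < ε → ‖F t‖ ≤ k := by
    have hclosed : ∀ k : ℕ, IsClosed {t : ℝ | ∀ n, ‖Fn n t‖ ≤ (k : ℝ)} := by
      intro k
      have : {t : ℝ | ∀ n, ‖Fn n t‖ ≤ (k : ℝ)} = ⋂ n, {t | ‖Fn n t‖ ≤ (k : ℝ)} := by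
        ext t; simp
      rw [this]
      exact isClosed_iInter fun n =>
        isClosed_le (continuous_norm.comp (hFn n)) continuous_const
    have hcover : (⋃ k : ℕ, {t : ℝ | ∀ n, ‖Fn n t‖ ≤ (k : ℝ)}) = Set.univ := by
      ext t
      simp only [Set.mem_iUnion, Set.mem_setOf_eq, Set.mem_univ, iff_true]
      have hbdd : BddAbove (Set.range fun n => ‖Fn n t‖) := by
        have : Tendsto (fun n => ‖Fn n t‖) atTop (𝓝 ‖F t‖) := (hlim t).norm
        exact this.bddAbove_range
      obtain ⟨M, hM⟩ := hbdd
      obtain ⟨k, hk⟩ := exists_nat_ge M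
      exact ⟨k, fun n => le_trans (hM ⟨n, rfl⟩) hk⟩
    obtain ⟨k, t0, ht0⟩ := nonempty_interior_of_iUnion_of_closed hclosed hcover
    obtain ⟨ε, hε, hsub⟩ := Metric.isOpen_iff.1 isOpen_interior t0 ht0
    refine ⟨k, t0, ε, hε, fun t ht => ?_⟩
    have ht' : t ∈ interior {t : ℝ | ∀ n, ‖Fn n t‖ ≤ (k : ℝ)} := by
      apply hsub; rwa [Metric.mem_ball, Real.dist_eq]
    have h2 : ∀ n, ‖Fn n t‖ ≤ (k : ℝ) := interior_subset ht'
    exact le_of_tendsto (hlim t).norm (Eventually.of_forall h2)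
  -- the difference D
  set D : ℝ → E := fun t => F t - t • F 1 with hD
  have hDadd : ∀ s t, D (s + t) = D s + D t := by
    intro s t; simp only [hD, hF s t, add_smul]; abel
  have hDrat : ∀ (q : ℚ) (t : ℝ), D ((q : ℝ) * t) = (q : ℝ) • D t := by
    intro q t; simp only [hD, hrat, smul_sub, smul_smul]
  have hDq : ∀ q : ℚ, D (q : ℝ) = 0 := by
    intro q
    have := hDrat q 1
    simp only [mul_one, hD] at this ⊢
    simp [this, smul_smul]
  set M : ℝ := k + (|c| + ε) * ‖F 1‖ with hM
  have hDball : ∀ t, |t - c| < ε → ‖D t‖ ≤ M := by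
    intro t ht
    have h1 : ‖F t‖ ≤ k := hball t ht
    have h2 : |t| ≤ |c| + ε := by
      have := abs_sub_abs_le_abs_sub t c
      linarith [le_of_lt ht, abs_nonneg (t - c)]
    calc ‖D t‖ ≤ ‖F t‖ + ‖t • F 1‖ := norm_sub_le _ _
      _ ≤ k + (|c| + ε) * ‖F 1‖ := by
          rw [norm_smul, Real.norm_eq_abs]
          gcongr
  -- shift: D t = D (t - q) for rational q
  have hshift : ∀ (t : ℝ) (q : ℚ), D t = D (t - q) := by
    intro t q
    have := hDadd (t - q) q
    rw [sub_add_cancel] at this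
    rw [this, hDq]; abel
  have hDzero : ∀ t, D t = 0 := by
    intro t
    have key : ∀ n : ℕ, ‖D t‖ ≤ M / (n + 1) := by
      intro n
      obtain ⟨q, hq1, hq2⟩ := exists_rat_btwn
        (show (n + 1 : ℝ) * t - c - ε < (n + 1 : ℝ) * t - c + ε by linarith)
      have hqin : |(n + 1 : ℝ) * t - q - c| < ε := by
        rw [abs_lt]; constructor <;> linarith
      have h1 : ‖D ((n + 1 : ℝ) * t - q)‖ ≤ M := hDball _ hqin
      have h2 : D ((n + 1 : ℝ) * t) = D ((n + 1 : ℝ) * t - q) := hshift _ q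
      have h3 : D ((n + 1 : ℝ) * t) = ((n : ℝ) + 1) • D t := by
        have := hDrat ((n : ℚ) + 1) t
        push_cast at this
        simpa using this
      have h4 : ((n : ℝ) + 1) * ‖D t‖ ≤ M := by
        calc ((n : ℝ) + 1) * ‖D t‖ = ‖((n : ℝ) + 1) • D t‖ := by
              rw [norm_smul, Real.norm_eq_abs, abs_of_pos]; positivity
          _ = ‖D ((n + 1 : ℝ) * t - q)‖ := by rw [← h2, h3]
          _ ≤ M := h1
      exact (le_div_iff₀' (by positivity : (0:ℝ) < (n:ℝ) + 1)).mpr h4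
    have hten : Tendsto (fun n : ℕ => M / (n + 1 : ℝ)) atTop (𝓝 0) :=
      tendsto_const_nhds.div_atTop (tendsto_atTop_add_const_right _ 1 tendsto_natCast_atTop_atTop)
    have : ‖D t‖ ≤ 0 := ge_of_tendsto' hten key
    simpa [norm_le_zero_iff] using this
  intro t
  have := hDzero t
  simp only [hD, sub_eq_zero] at this
  exact this


/-- Theorem 2.5: stability with `μ ∈ {1, i}` and a continuity assumption. -/
theorem stability_jstar_hom_continuous {𝓐 𝓑 : Type*}
    [NormedRing 𝓐] [StarRing 𝓐] [CStarRing 𝓐] [NormedAlgebra ℂ 𝓐] [StarModule ℂ 𝓐]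
    [CompleteSpace 𝓐]
    [NormedRing 𝓑] [StarRing 𝓑] [CStarRing 𝓑] [NormedAlgebra ℂ 𝓑] [StarModule ℂ 𝓑]
    [CompleteSpace 𝓑]
    (A : Submodule ℂ 𝓐) (hA : IsClosed (A : Set 𝓐)) (hAc : ∀ a ∈ A, a * star a * a ∈ A)
    (B : Submodule ℂ 𝓑) (hB : IsClosed (B : Set 𝓑)) (hBc : ∀ b ∈ B, b * star b * b ∈ B)
    (h : A → B) (h0 : h 0 = 0)
    (φ : A → A → A → ℝ) (hφ : ∀ x y z, 0 ≤ φ x y z)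
    (hsum : ∀ x y z : A,
      Summable fun n : ℕ => φ ((2:ℂ)^n • x) ((2:ℂ)^n • y) ((2:ℂ)^n • z) / 2^n)
    (hineq : ∀ μ ∈ ({1, Complex.I} : Set ℂ), ∀ x y z : A,
      ‖((h (μ • x + μ • y + jcube A hAc z) : 𝓑)
        - μ • (h x : 𝓑) - μ • (h y : 𝓑)
        - (h z : 𝓑) * star (h z : 𝓑) * (h z : 𝓑))‖ ≤ φ x y z)
    (hcont : ∀ x : A, Continuous fun t : ℝ => h ((t : ℂ) • x)) :
    ∃! T : A → B,
      (∀ x y, T (x + y) = T x + T y) ∧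
      (∀ (c : ℂ) (x : A), T (c • x) = c • T x) ∧
      (∀ z : A, (T (jcube A hAc z) : 𝓑) = (T z : 𝓑) * star (T z : 𝓑) * (T z : 𝓑)) ∧
      (∀ x : A, ‖(h x : 𝓑) - (T x : 𝓑)‖
        ≤ (1/2) * ∑' n : ℕ, φ ((2:ℂ)^n • x) ((2:ℂ)^n • x) 0 / 2^n) := by
  classical
  haveI : CompleteSpace B := hB.completeSpace_coe
  have hj0 : jcube A hAc 0 = 0 := by
    apply Subtype.ext; simp [jcube]
  -- basic estimates
  have E1 : ∀ x y : A, ‖(h (x + y) : 𝓑) - (h x : 𝓑) - (h y : 𝓑)‖ ≤ φ x y 0 := by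
    intro x y
    have := hineq 1 (by simp) x y 0
    simpa [hj0, h0] using this
  have E2 : ∀ z : A, ‖(h (jcube A hAc z) : 𝓑)
      - (h z : 𝓑) * star (h z : 𝓑) * (h z : 𝓑)‖ ≤ φ 0 0 z := by
    intro z
    have := hineq 1 (by simp) 0 0 z
    simpa [h0] using this
  have E3 : ∀ x : A, ‖(h (Complex.I • x) : 𝓑) - Complex.I • (h x : 𝓑)‖ ≤ φ x 0 0 := by
    intro x
    have := hineq Complex.I (by simp) x 0 0
    simpa [hj0, h0] using this
  have hsum0 : ∀ x y : A, Summable (fun n : ℕ => φ ((2:ℂ)^n • x) ((2:ℂ)^n • y) 0 / 2^n) := by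
    intro x y; simpa using hsum x y 0
  have hsumz : ∀ z : A, Summable (fun n : ℕ => φ 0 0 ((2:ℂ)^n • z) / 2^n) := by
    intro z; simpa using hsum 0 0 z
  have hsumx : ∀ x : A, Summable (fun n : ℕ => φ ((2:ℂ)^n • x) 0 0 / 2^n) := by
    intro x; simpa using hsum x 0 0
  -- the approximating sequence
  set g : A → ℕ → B := fun x n => ((1/2 : ℂ))^n • h ((2:ℂ)^n • x) with hgdef
  have hgcoe : ∀ x n, (g x n : 𝓑) = ((1/2:ℂ))^n • (h ((2:ℂ)^n • x) : 𝓑) := by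
    intro x n; simp [hgdef]
  have hhalf : ∀ n : ℕ, ‖((1/2:ℂ))^n‖ = (1/2:ℝ)^n := by
    intro n; rw [norm_pow]; norm_num
  have keydist : ∀ (x : A) (n : ℕ),
      dist (g x n) (g x (n+1)) ≤ (1/2) * (φ ((2:ℂ)^n • x) ((2:ℂ)^n • x) 0 / 2^n) := by
    intro x n
    set a := (2:ℂ)^n • x with ha
    have h2a : (2:ℂ)^(n+1) • x = a + a := by
      rw [ha, ← two_smul ℂ, smul_smul, ← pow_succ']
    have hE := E1 a a
    have hdist : dist (g x n) (g x (n+1)) = ‖(g x n : 𝓑) - (g x (n+1) : 𝓑)‖ := by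
      rw [dist_eq_norm]; rfl
    have hcoe : (g x n : 𝓑) - (g x (n+1) : 𝓑)
        = -(((1/2:ℂ))^(n+1) • ((h (a + a) : 𝓑) - (h a : 𝓑) - (h a : 𝓑))) := by
      rw [hgcoe, hgcoe, h2a, ← ha]
      have : ((1/2:ℂ))^n = ((1/2:ℂ))^(n+1) * 2 := by
        rw [pow_succ]; ring
      rw [this]
      rw [smul_sub, smul_sub, mul_smul]
      module
    rw [hdist, hcoe, norm_neg, norm_smul, hhalf]
    have hb : ((1/2:ℝ))^(n+1) * ‖(h (a + a) : 𝓑) - (h a : 𝓑) - (h a : 𝓑)‖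
        ≤ ((1/2:ℝ))^(n+1) * φ a a 0 := by
      gcongr
    refine hb.trans_eq ?_
    rw [pow_succ, one_div_pow]
    ring
  have hcauchy : ∀ x : A, CauchySeq (g x) := by
    intro x
    apply cauchySeq_of_summable_dist
    have hd : Summable (fun n : ℕ => (1/2) * (φ ((2:ℂ)^n • x) ((2:ℂ)^n • x) 0 / 2^n)) :=
      (hsum0 x x).mul_left (1/2)
    exact Summable.of_nonneg_of_le (fun n => dist_nonneg) (keydist x) hd
  obtain ⟨T, hT⟩ : ∃ T : A → B, ∀ x, Tendsto (g x) atTop (𝓝 (T x)) := by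
    refine ⟨fun x => (cauchySeq_tendsto_of_complete (hcauchy x)).choose,
      fun x => (cauchySeq_tendsto_of_complete (hcauchy x)).choose_spec⟩
  -- the error bound
  have hbound : ∀ x : A, ‖(h x : 𝓑) - (T x : 𝓑)‖
      ≤ (1/2) * ∑' n : ℕ, φ ((2:ℂ)^n • x) ((2:ℂ)^n • x) 0 / 2^n := by
    intro x
    have hg0 : g x 0 = h x := by
      simp [hgdef]
    have hd : Summable (fun n : ℕ => (1/2) * (φ ((2:ℂ)^n • x) ((2:ℂ)^n • x) 0 / 2^n)) :=
      (hsum0 x x).mul_left (1/2)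
    have := dist_le_tsum_of_dist_le_of_tendsto₀
      (fun n : ℕ => (1/2) * (φ ((2:ℂ)^n • x) ((2:ℂ)^n • x) 0 / 2^n))
      (keydist x) hd (hT x)
    rw [hg0, tsum_mul_left] at this
    calc ‖(h x : 𝓑) - (T x : 𝓑)‖ = dist (h x) (T x) := by
          rw [dist_eq_norm]; rfl
      _ ≤ _ := this
  -- additivity
  have hadd : ∀ x y, T (x + y) = T x + T y := by
    intro x y
    have hzero : Tendsto (fun n => g (x+y) n - g x n - g y n) atTop (𝓝 0) := by
      apply squeeze_zero_norm (a := fun n : ℕ => φ ((2:ℂ)^n • x) ((2:ℂ)^n • y) 0 / 2^n)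
      · intro n
        have hE := E1 ((2:ℂ)^n • x) ((2:ℂ)^n • y)
        have harg : (2:ℂ)^n • (x + y) = (2:ℂ)^n • x + (2:ℂ)^n • y := smul_add _ _ _
        have hcoe : ((g (x+y) n - g x n - g y n : B) : 𝓑)
            = ((1/2:ℂ))^n • ((h ((2:ℂ)^n • x + (2:ℂ)^n • y) : 𝓑)
                - (h ((2:ℂ)^n • x) : 𝓑) - (h ((2:ℂ)^n • y) : 𝓑)) := by
          rw [AddSubgroupClass.coe_sub, AddSubgroupClass.coe_sub, hgcoe, hgcoe, hgcoe,
            harg, ← smul_sub, ← smul_sub]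
        have hn : ‖g (x+y) n - g x n - g y n‖
            = ‖((g (x+y) n - g x n - g y n : B) : 𝓑)‖ := rfl
        rw [hn, hcoe, norm_smul, hhalf]
        calc ((1/2:ℝ))^n * ‖(h ((2:ℂ)^n • x + (2:ℂ)^n • y) : 𝓑)
                - (h ((2:ℂ)^n • x) : 𝓑) - (h ((2:ℂ)^n • y) : 𝓑)‖
            ≤ ((1/2:ℝ))^n * φ ((2:ℂ)^n • x) ((2:ℂ)^n • y) 0 := by gcongr
          _ = φ ((2:ℂ)^n • x) ((2:ℂ)^n • y) 0 / 2^n := by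
              rw [one_div_pow]; ring
      · exact (hsum0 x y).tendsto_atTop_zero
    have h2 : Tendsto (fun n => g (x+y) n - g x n - g y n) atTop
        (𝓝 (T (x+y) - T x - T y)) := ((hT (x+y)).sub (hT x)).sub (hT y)
    have h3 := tendsto_nhds_unique h2 hzero
    rw [sub_sub, sub_eq_zero] at h3
    exact h3
  -- I-homogeneity
  have hI : ∀ x, T (Complex.I • x) = Complex.I • T x := by
    intro x
    have hzero : Tendsto (fun n => g (Complex.I • x) n - Complex.I • g x n) atTop (𝓝 0) := by
      apply squeeze_zero_norm (a := fun n : ℕ => φ ((2:ℂ)^n • x) 0 0 / 2^n)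
      · intro n
        have hE := E3 ((2:ℂ)^n • x)
        have harg : (2:ℂ)^n • (Complex.I • x) = Complex.I • ((2:ℂ)^n • x) :=
          smul_comm _ _ _
        have hcoe : ((g (Complex.I • x) n - Complex.I • g x n : B) : 𝓑)
            = ((1/2:ℂ))^n • ((h (Complex.I • ((2:ℂ)^n • x)) : 𝓑)
                - Complex.I • (h ((2:ℂ)^n • x) : 𝓑)) := by
          simp only [AddSubgroupClass.coe_sub, SetLike.val_smul, hgcoe]
          rw [harg]
          module
        have hn : ‖g (Complex.I • x) n - Complex.I • g x n‖
            = ‖((g (Complex.I • x) n - Complex.I • g x n : B) : 𝓑)‖ := rfl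
        rw [hn, hcoe, norm_smul, hhalf]
        calc ((1/2:ℝ))^n * ‖(h (Complex.I • ((2:ℂ)^n • x)) : 𝓑)
                - Complex.I • (h ((2:ℂ)^n • x) : 𝓑)‖
            ≤ ((1/2:ℝ))^n * φ ((2:ℂ)^n • x) 0 0 := by gcongr
          _ = φ ((2:ℂ)^n • x) 0 0 / 2^n := by rw [one_div_pow]; ring
      · exact (hsumx x).tendsto_atTop_zero
    have h2 : Tendsto (fun n => g (Complex.I • x) n - Complex.I • g x n) atTop
        (𝓝 (T (Complex.I • x) - Complex.I • T x)) :=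
      (hT (Complex.I • x)).sub ((hT x).const_smul Complex.I)
    have h3 := tendsto_nhds_unique h2 hzero
    rwa [sub_eq_zero] at h3
  -- real homogeneity
  have hR : ∀ (t : ℝ) (x : A), T ((t:ℂ) • x) = (t:ℂ) • T x := by
    intro t x
    have hlim : ∀ s : ℝ, Tendsto (fun n => ((1/2:ℂ))^n • (h ((((2:ℝ)^n * s : ℝ):ℂ) • x) : 𝓑))
        atTop (𝓝 (T ((s:ℂ) • x) : 𝓑)) := by
      intro s
      have harg : ∀ n : ℕ, (((2:ℝ)^n * s : ℝ):ℂ) • x = (2:ℂ)^n • ((s:ℂ) • x) := by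
        intro n; rw [smul_smul]; norm_cast
      have heq : (fun n => ((1/2:ℂ))^n • (h ((((2:ℝ)^n * s : ℝ):ℂ) • x) : 𝓑))
          = fun n => ((g ((s:ℂ) • x) n : B) : 𝓑) := by
        funext n; rw [hgcoe, harg]
      rw [heq]
      exact (continuous_subtype_val.tendsto _).comp (hT _)
    have key := additive_limit_linear (fun s : ℝ => (T ((s:ℂ) • x) : 𝓑))
      (fun n s => ((1/2:ℂ))^n • (h ((((2:ℝ)^n * s : ℝ):ℂ) • x) : 𝓑))
      (by
        intro s u
        have harg : (((s + u : ℝ)):ℂ) • x = (s:ℂ) • x + (u:ℂ) • x := by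
          push_cast [add_smul]
          rfl
        show (T (((s + u : ℝ):ℂ) • x) : 𝓑) = (T ((s:ℂ) • x) : 𝓑) + (T ((u:ℂ) • x) : 𝓑)
        rw [harg, hadd]
        push_cast
        ring)
      (by
        intro n
        exact Continuous.const_smul
          (continuous_subtype_val.comp ((hcont x).comp (continuous_const.mul continuous_id))) _)
      hlim t
    have h1 : ((1:ℝ):ℂ) • x = x := by norm_num
    rw [h1] at key
    apply Subtype.ext
    rw [key]
    rfl
  -- full complex homogeneity
  have hhom : ∀ (c : ℂ) (x : A), T (c • x) = c • T x := by
    intro c x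
    have hcx : c • x = (c.re : ℂ) • x + (c.im : ℂ) • (Complex.I • x) := by
      rw [smul_smul, ← add_smul]
      rw [show (c.re : ℂ) + (c.im : ℂ) * Complex.I = c from Complex.re_add_im c]
    rw [hcx, hadd, hR, hR, hI, smul_smul, ← add_smul,
      show (c.re : ℂ) + (c.im : ℂ) * Complex.I = c from Complex.re_add_im c]
  -- cube property
  have hcube : ∀ z : A, (T (jcube A hAc z) : 𝓑)
      = (T z : 𝓑) * star (T z : 𝓑) * (T z : 𝓑) := by
    intro z
    have hjs : ∀ n : ℕ, jcube A hAc ((2:ℂ)^n • z) = (2:ℂ)^(3*n) • jcube A hAc z := by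
      intro n
      apply Subtype.ext
      show ((2:ℂ)^n • (z:𝓐)) * star ((2:ℂ)^n • (z:𝓐)) * ((2:ℂ)^n • (z:𝓐))
          = (2:ℂ)^(3*n) • ((z:𝓐) * star (z:𝓐) * (z:𝓐))
      rw [star_smul, smul_mul_smul_comm, smul_mul_smul_comm]
      congr 1
      rw [show star ((2:ℂ)^n) = (2:ℂ)^n from by simp, ← pow_add, ← pow_add]
      congr 1
      ring
    have h3n : Tendsto (fun n : ℕ => 3 * n) atTop atTop :=
      tendsto_atTop_mono (fun n => by omega : ∀ n : ℕ, n ≤ 3 * n) tendsto_id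
    have hsub : Tendsto (fun n => ((g (jcube A hAc z) (3*n) : B) : 𝓑)) atTop
        (𝓝 (T (jcube A hAc z) : 𝓑)) :=
      ((continuous_subtype_val.tendsto _).comp (hT _)).comp h3n
    have hu : Tendsto (fun n => ((g z n : B) : 𝓑)) atTop (𝓝 (T z : 𝓑)) :=
      (continuous_subtype_val.tendsto _).comp (hT z)
    have hP : Tendsto (fun n => ((g z n : B):𝓑) * star ((g z n : B):𝓑) * ((g z n : B):𝓑))
        atTop (𝓝 ((T z :𝓑) * star (T z:𝓑) * (T z:𝓑))) := (hu.mul hu.star).mul hu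
    have hdiff : Tendsto (fun n => ((g (jcube A hAc z) (3*n) : B) : 𝓑)
        - ((g z n : B):𝓑) * star ((g z n : B):𝓑) * ((g z n : B):𝓑)) atTop (𝓝 0) := by
      apply squeeze_zero_norm (a := fun n : ℕ => φ 0 0 ((2:ℂ)^n • z) / 2^n)
      · intro n
        have hE := E2 ((2:ℂ)^n • z)
        have hcoe : ((g (jcube A hAc z) (3*n) : B) : 𝓑)
            - ((g z n : B):𝓑) * star ((g z n : B):𝓑) * ((g z n : B):𝓑)
            = ((1/2:ℂ))^(3*n) • ((h (jcube A hAc ((2:ℂ)^n • z)) : 𝓑)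
                - (h ((2:ℂ)^n • z):𝓑) * star (h ((2:ℂ)^n • z):𝓑) * (h ((2:ℂ)^n • z):𝓑)) := by
          rw [hgcoe, hgcoe, ← hjs n, star_smul, smul_mul_smul_comm, smul_mul_smul_comm,
            show star ((1/2:ℂ)^n) = (1/2:ℂ)^n from by simp,
            show (1/2:ℂ)^n * (1/2:ℂ)^n * (1/2:ℂ)^n = (1/2:ℂ)^(3*n) from by
              rw [← pow_add, ← pow_add]; congr 1; ring,
            ← smul_sub]
        rw [show ‖((g (jcube A hAc z) (3*n) : B) : 𝓑)
            - ((g z n : B):𝓑) * star ((g z n : B):𝓑) * ((g z n : B):𝓑)‖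
            = ‖((1/2:ℂ))^(3*n) • ((h (jcube A hAc ((2:ℂ)^n • z)) : 𝓑)
                - (h ((2:ℂ)^n • z):𝓑) * star (h ((2:ℂ)^n • z):𝓑) * (h ((2:ℂ)^n • z):𝓑))‖
            from by rw [hcoe], norm_smul, hhalf]
        calc ((1/2:ℝ))^(3*n) * ‖(h (jcube A hAc ((2:ℂ)^n • z)) : 𝓑)
                - (h ((2:ℂ)^n • z):𝓑) * star (h ((2:ℂ)^n • z):𝓑) * (h ((2:ℂ)^n • z):𝓑)‖
            ≤ ((1/2:ℝ))^(3*n) * φ 0 0 ((2:ℂ)^n • z) := by gcongr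
          _ ≤ ((1/2:ℝ))^n * φ 0 0 ((2:ℂ)^n • z) := by
              apply mul_le_mul_of_nonneg_right _ (hφ _ _ _)
              exact pow_le_pow_of_le_one (by norm_num) (by norm_num) (by omega)
          _ = φ 0 0 ((2:ℂ)^n • z) / 2^n := by rw [one_div_pow]; ring
      · exact (hsumz z).tendsto_atTop_zero
    have := tendsto_nhds_unique (hsub.sub hP) hdiff
    rwa [sub_eq_zero] at this
  -- uniqueness
  refine ⟨T, ⟨hadd, hhom, hcube, hbound⟩, ?_⟩
  intro T' ⟨hadd', hhom', hcube', hbound'⟩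
  have hT' : ∀ x, Tendsto (g x) atTop (𝓝 (T' x)) := by
    intro x
    rw [← tendsto_sub_nhds_zero_iff]
    apply squeeze_zero_norm
      (a := fun n : ℕ => (1/2) * ∑' k : ℕ, φ ((2:ℂ)^(k+n) • x) ((2:ℂ)^(k+n) • x) 0 / 2^(k+n))
    · intro n
      have h1 : T' ((2:ℂ)^n • x) = (2:ℂ)^n • T' x := hhom' _ _
      have hcoe : ((g x n - T' x : B) : 𝓑)
          = ((1/2:ℂ))^n • ((h ((2:ℂ)^n • x) : 𝓑) - (T' ((2:ℂ)^n • x) : 𝓑)) := by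
        rw [AddSubgroupClass.coe_sub, hgcoe, h1, SetLike.val_smul, smul_sub, smul_smul,
          ← mul_pow]
        norm_num
      have hb := hbound' ((2:ℂ)^n • x)
      rw [show ‖g x n - T' x‖ = ‖((g x n - T' x : B) : 𝓑)‖ from rfl, hcoe, norm_smul, hhalf]
      have hterm : ∀ k : ℕ,
          (1/2:ℝ)^n * (φ ((2:ℂ)^k • ((2:ℂ)^n • x)) ((2:ℂ)^k • ((2:ℂ)^n • x)) 0 / 2^k)
          = φ ((2:ℂ)^(k+n) • x) ((2:ℂ)^(k+n) • x) 0 / 2^(k+n) := by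
        intro k
        rw [show (2:ℂ)^k • ((2:ℂ)^n • x) = (2:ℂ)^(k+n) • x from by rw [smul_smul, ← pow_add],
          pow_add, one_div_pow]
        ring
      calc (1/2:ℝ)^n * ‖(h ((2:ℂ)^n • x) : 𝓑) - (T' ((2:ℂ)^n • x) : 𝓑)‖
          ≤ (1/2:ℝ)^n * ((1/2) * ∑' k : ℕ,
              φ ((2:ℂ)^k • ((2:ℂ)^n • x)) ((2:ℂ)^k • ((2:ℂ)^n • x)) 0 / 2^k) := by gcongr
        _ = (1/2) * ∑' k : ℕ, (1/2:ℝ)^n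
              * (φ ((2:ℂ)^k • ((2:ℂ)^n • x)) ((2:ℂ)^k • ((2:ℂ)^n • x)) 0 / 2^k) := by
            rw [tsum_mul_left]; ring
        _ = (1/2) * ∑' k : ℕ, φ ((2:ℂ)^(k+n) • x) ((2:ℂ)^(k+n) • x) 0 / 2^(k+n) := by
            rw [tsum_congr hterm]
    · have := (tendsto_sum_nat_add
        (fun m : ℕ => φ ((2:ℂ)^m • x) ((2:ℂ)^m • x) 0 / 2^m)).const_mul (1/2:ℝ)
      simpa using this
  exact funext fun x => tendsto_nhds_unique (hT' x) (hT x)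
end

section
/- Let A, B be J*-algebras and h : A → B satisfy ‖h(x + y) − h(x) − h(y)‖ ≤ φ(x,y,0) for all x, y, where ∑_{n} 2^{-n} φ(2^n x, 2^n y, 0) < ∞, and additionally ‖h(2^{3n} z z* z) − h(2^n z) h(2^n z)* h(2^n z)‖ ≤ φ(0, 0, 2^n z) for all z ∈ A and n ∈ ℕ, with 2^{-n} φ(0,0,2^n z) → 0. If T(x) := lim_{n→∞} 2^{-n} h(2^n x) exists for all x, then T(z z* z) = T(z) T(z)* T(z) for all z ∈ A. -/
open Filter Topology

theorem norm_inv_two_pow_three_mul_smul_le {F : Type*} [SeminormedAddCommGroup F]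
    [NormedSpace ℂ F] {ε : ℝ} {x : F} (n : ℕ) (hx : ‖x‖ ≤ ε) :
    ‖((2:ℂ) ^ (3 * n))⁻¹ • x‖ ≤ ε / 2 ^ n := by
  have hε : 0 ≤ ε := (norm_nonneg x).trans hx
  rw [norm_smul, norm_inv, norm_pow, Complex.norm_ofNat, inv_mul_eq_div]
  calc ‖x‖ / 2 ^ (3 * n) ≤ ε / 2 ^ (3 * n) := by gcongr
    _ ≤ ε / 2 ^ n := by gcongr <;> [norm_num; omega]

theorem inv_two_pow_mul_star_mul_self (n : ℕ) :
    ((2:ℂ) ^ n)⁻¹ * star ((2:ℂ) ^ n)⁻¹ * ((2:ℂ) ^ n)⁻¹ = ((2:ℂ) ^ (3 * n))⁻¹ := by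
  simp only [star_inv₀, star_pow, star_ofNat]
  rw [← mul_inv, ← mul_inv, ← pow_add, ← pow_add, show n + n + n = 3 * n by ring]

section Rescaling

variable {E : Type*} [NormedRing E] [StarRing E] [NormedAlgebra ℂ E] [StarModule ℂ E]

theorem smul_mul_star_mul_smul_s12 (c : ℂ) (x : E) :
    c • x * star (c • x) * c • x = (c * star c * c) • (x * star x * x) := by
  rw [star_smul, smul_mul_smul_comm, smul_mul_smul_comm]

theorem eq_mul_star_mul_of_tendsto_rescaled [ContinuousStar E] {u v : ℕ → E} {a b : E}
    {ε : ℕ → ℝ} (hu : Tendsto (fun n ↦ ((2:ℂ) ^ n)⁻¹ • u n) atTop (𝓝 a))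
    (hv : Tendsto (fun n ↦ ((2:ℂ) ^ (3 * n))⁻¹ • v n) atTop (𝓝 b))
    (hdefect : ∀ n, ‖v n - u n * star (u n) * u n‖ ≤ ε n)
    (hε : Tendsto (fun n ↦ ε n / 2 ^ n) atTop (𝓝 0)) :
    b = a * star a * a := by
  have hcube := (hu.mul hu.star).mul hu
  simp only [smul_mul_star_mul_smul_s12, inv_two_pow_mul_star_mul_self] at hcube
  have hdiff : Tendsto (fun n ↦ ((2:ℂ) ^ (3 * n))⁻¹ • (v n - u n * star (u n) * u n))
      atTop (𝓝 0) :=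
    squeeze_zero_norm (fun n ↦ norm_inv_two_pow_three_mul_smul_le n (hdefect n)) hε
  simp only [smul_sub] at hdiff
  exact sub_eq_zero.mp (tendsto_nhds_unique (hv.sub hcube) hdiff)

end Rescaling

theorem limit_preserves_cube_general {𝓐 𝓑 : Type*}
    [NormedRing 𝓐] [StarRing 𝓐] [NormedAlgebra ℂ 𝓐]
    [NormedRing 𝓑] [StarRing 𝓑] [CStarRing 𝓑] [NormedAlgebra ℂ 𝓑] [StarModule ℂ 𝓑]
    (A : Submodule ℂ 𝓐) (hAc : ∀ a ∈ A, a * star a * a ∈ A)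
    (B : Submodule ℂ 𝓑)
    (h : A → B) (φ : A → A → A → ℝ)
    (hcube : ∀ (z : A) (n : ℕ),
      ‖(h ((2:ℂ)^(3*n) • jcube A hAc z) : 𝓑)
        - (h ((2:ℂ)^n • z) : 𝓑) * star (h ((2:ℂ)^n • z) : 𝓑) * (h ((2:ℂ)^n • z) : 𝓑)‖
        ≤ φ 0 0 ((2:ℂ)^n • z))
    (hlim : ∀ z : A, Tendsto (fun n : ℕ => φ 0 0 ((2:ℂ)^n • z) / 2^n) atTop (nhds 0))
    (T : A → B)
    (hT : ∀ x : A,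
      Tendsto (fun n : ℕ => (((2:ℂ)^n)⁻¹ • h ((2:ℂ)^n • x) : B)) atTop (nhds (T x))) :
    ∀ z : A, (T (jcube A hAc z) : 𝓑) = (T z : 𝓑) * star (T z : 𝓑) * (T z : 𝓑) := by
  have hT' : ∀ x, Tendsto (fun n : ℕ ↦ ((2:ℂ) ^ n)⁻¹ • (h ((2:ℂ) ^ n • x) : 𝓑))
      atTop (𝓝 (T x : 𝓑)) := fun x ↦ by
    simpa only [Submodule.coe_smul] using tendsto_subtype_rng.mp (hT x)
  intro z
  exact eq_mul_star_mul_of_tendsto_rescaled (hT' z)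
    ((hT' (jcube A hAc z)).comp (tendsto_id.const_mul_atTop' three_pos)) (hcube z) (hlim z)

/-- The limit map `T` preserves the Jordan triple cube. -/
theorem limit_preserves_cube {𝓐 𝓑 : Type*}
    [NormedRing 𝓐] [StarRing 𝓐] [CStarRing 𝓐] [NormedAlgebra ℂ 𝓐] [StarModule ℂ 𝓐]
    [CompleteSpace 𝓐]
    [NormedRing 𝓑] [StarRing 𝓑] [CStarRing 𝓑] [NormedAlgebra ℂ 𝓑] [StarModule ℂ 𝓑]
    [CompleteSpace 𝓑]
    (A : Submodule ℂ 𝓐) (hA : IsClosed (A : Set 𝓐)) (hAc : ∀ a ∈ A, a * star a * a ∈ A)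
    (B : Submodule ℂ 𝓑) (hB : IsClosed (B : Set 𝓑)) (hBc : ∀ b ∈ B, b * star b * b ∈ B)
    (h : A → B) (φ : A → A → A → ℝ) (hφ : ∀ x y z, 0 ≤ φ x y z)
    (hadd : ∀ x y : A, ‖(h (x + y) : 𝓑) - (h x : 𝓑) - (h y : 𝓑)‖ ≤ φ x y 0)
    (hsum : ∀ x y : A,
      Summable fun n : ℕ => φ ((2:ℂ)^n • x) ((2:ℂ)^n • y) 0 / 2^n)
    (hcube : ∀ (z : A) (n : ℕ),
      ‖(h ((2:ℂ)^(3*n) • jcube A hAc z) : 𝓑)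
        - (h ((2:ℂ)^n • z) : 𝓑) * star (h ((2:ℂ)^n • z) : 𝓑) * (h ((2:ℂ)^n • z) : 𝓑)‖
        ≤ φ 0 0 ((2:ℂ)^n • z))
    (hlim : ∀ z : A, Tendsto (fun n : ℕ => φ 0 0 ((2:ℂ)^n • z) / 2^n) atTop (nhds 0))
    (T : A → B)
    (hT : ∀ x : A,
      Tendsto (fun n : ℕ => (((2:ℂ)^n)⁻¹ • h ((2:ℂ)^n • x) : B)) atTop (nhds (T x))) :
    ∀ z : A, (T (jcube A hAc z) : 𝓑) = (T z : 𝓑) * star (T z : 𝓑) * (T z : 𝓑) :=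
  limit_preserves_cube_general A hAc B h φ hcube hlim T hT
end

section
/- Every J*-homomorphism between J*-algebras is norm decreasing: if T : A → B is ℂ-linear with T(x x* x) = T(x) T(x)* T(x) for all x ∈ A, and T is bounded, then ‖T(x)‖ ≤ ‖x‖ for all x ∈ A. -/
/-!
The cube `x ↦ x x* x` raises norms to the third power in any C*-algebra, and `T` commutes with
it. Iterating `n` times turns the bound `‖T x‖ ≤ C ‖x‖` into `‖T x‖ ^ 3 ^ n ≤ C ‖x‖ ^ 3 ^ n`,
and a fixed constant `C` cannot absorb the ratio `(‖T x‖ / ‖x‖) ^ 3 ^ n` unless that ratio is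
at most `1`.
-/

open Filter Topology

theorem CStarRing.norm_mul_star_mul_self {E : Type*} [NonUnitalNormedRing E] [StarRing E]
    [CStarRing E] (a : E) : ‖a * star a * a‖ = ‖a‖ ^ 3 := by
  rcases eq_or_ne a 0 with rfl | ha
  · simp
  refine le_antisymm ?_ (le_of_mul_le_mul_right ?_ (norm_pos_iff.mpr ha))
  · calc ‖a * star a * a‖ ≤ ‖a * star a‖ * ‖a‖ := norm_mul_le _ _
      _ = ‖a‖ ^ 3 := by rw [norm_self_mul_star]; ring
  · calc ‖a‖ ^ 3 * ‖a‖ = ‖a * star a * (a * star a)‖ := by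
          rw [(IsSelfAdjoint.mul_star_self a).norm_mul_self, norm_self_mul_star]; ring
      _ = ‖a * star a * a * star a‖ := by rw [mul_assoc (a * star a)]
      _ ≤ ‖a * star a * a‖ * ‖a‖ := (norm_mul_le _ _).trans_eq (by rw [norm_star])

theorem Function.Semiconj.iterate_pow {α M : Type*} [Monoid M] {g : α → M} {f : α → α} {p : ℕ}
    (h : Semiconj g f (· ^ p)) (n : ℕ) (x : α) : g (f^[n] x) = g x ^ p ^ n := by
  rw [h.iterate_right n x, pow_iterate]

theorem le_of_frequently_pow_le_mul_pow {r s C : ℝ} (hs : 0 ≤ s)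
    (h : ∃ᶠ m in atTop, r ^ m ≤ C * s ^ m) : r ≤ s := by
  by_contra! hsr
  have hr : 0 < r := hs.trans_lt hsr
  refine h (Eventually.mono ?_ fun m hm => not_le.mpr hm)
  rcases hs.eq_or_lt with rfl | hs
  · filter_upwards [eventually_ge_atTop 1] with m hm
    rw [zero_pow (by omega), mul_zero]
    exact pow_pos hr m
  · have hratio : 1 < r / s := (one_lt_div hs).mpr hsr
    filter_upwards [(tendsto_pow_atTop_atTop_of_one_lt hratio).eventually_gt_atTop C] with m hm
    rwa [div_pow, lt_div_iff₀ (pow_pos hs m)] at hm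

theorem jstar_hom_norm_decreasing_general {𝓐 𝓑 : Type*}
    [NormedRing 𝓐] [StarRing 𝓐] [CStarRing 𝓐] [NormedAlgebra ℂ 𝓐]
    [NormedRing 𝓑] [StarRing 𝓑] [CStarRing 𝓑] [NormedAlgebra ℂ 𝓑]
    (A : Submodule ℂ 𝓐) (hAc : ∀ a ∈ A, a * star a * a ∈ A)
    (B : Submodule ℂ 𝓑)
    (T : A → B)
    (hcube : ∀ z : A, (T (jcube A hAc z) : 𝓑) = (T z : 𝓑) * star (T z : 𝓑) * (T z : 𝓑))
    (hbdd : ∃ C : ℝ, ∀ x : A, ‖(T x : 𝓑)‖ ≤ C * ‖(x : 𝓐)‖) :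
    ∀ x : A, ‖(T x : 𝓑)‖ ≤ ‖(x : 𝓐)‖ := by
  obtain ⟨C, hC⟩ := hbdd
  intro x
  have hnorm : Function.Semiconj (fun z : A => ‖(z : 𝓐)‖) (jcube A hAc) (· ^ 3) :=
    fun z => CStarRing.norm_mul_star_mul_self (z : 𝓐)
  have hnormT : Function.Semiconj (fun z : A => ‖(T z : 𝓑)‖) (jcube A hAc) (· ^ 3) :=
    fun z => by simp only [hcube, CStarRing.norm_mul_star_mul_self]
  refine le_of_frequently_pow_le_mul_pow (C := C) (norm_nonneg _)
    (frequently_atTop.mpr fun n => ?_)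
  refine ⟨3 ^ n, (Nat.lt_pow_self (by norm_num)).le, ?_⟩
  simpa only [hnorm.iterate_pow, hnormT.iterate_pow] using hC ((jcube A hAc)^[n] x)

/-- Every bounded J*-homomorphism is norm decreasing. -/
theorem jstar_hom_norm_decreasing {𝓐 𝓑 : Type*}
    [NormedRing 𝓐] [StarRing 𝓐] [CStarRing 𝓐] [NormedAlgebra ℂ 𝓐] [StarModule ℂ 𝓐]
    [CompleteSpace 𝓐]
    [NormedRing 𝓑] [StarRing 𝓑] [CStarRing 𝓑] [NormedAlgebra ℂ 𝓑] [StarModule ℂ 𝓑]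
    [CompleteSpace 𝓑]
    (A : Submodule ℂ 𝓐) (hA : IsClosed (A : Set 𝓐)) (hAc : ∀ a ∈ A, a * star a * a ∈ A)
    (B : Submodule ℂ 𝓑) (hB : IsClosed (B : Set 𝓑)) (hBc : ∀ b ∈ B, b * star b * b ∈ B)
    (T : A → B)
    (hadd : ∀ x y, T (x + y) = T x + T y)
    (hsmul : ∀ (c : ℂ) (x : A), T (c • x) = c • T x)
    (hcube : ∀ z : A, (T (jcube A hAc z) : 𝓑) = (T z : 𝓑) * star (T z : 𝓑) * (T z : 𝓑))
    (hbdd : ∃ C : ℝ, ∀ x : A, ‖(T x : 𝓑)‖ ≤ C * ‖(x : 𝓐)‖) :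
    ∀ x : A, ‖(T x : 𝓑)‖ ≤ ‖(x : 𝓐)‖ :=
  jstar_hom_norm_decreasing_general A hAc B T hcube hbdd
end

section
/- Let E be a Banach space and f : ℕ → E a sequence, and suppose f is defined from a map h via f(n) = 2^{-n} h(2^n x) where ‖h(2x') − 2h(x')‖ ≤ φ(x', x') for all x' with ∑_n 2^{-n} φ(2^n x, 2^n x) < ∞. Then (2^{-n} h(2^n x))_n is a Cauchy sequence, hence convergent in E. -/
open Filter Topology

/-- Key convergence step in the direct (Hyers) method. -/
theorem hyers_cauchy {E : Type*} [NormedAddCommGroup E] [NormedSpace ℝ E] [CompleteSpace E]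
    (h : E → E) (φ : E → E → ℝ)
    (hb : ∀ x' : E, ‖h ((2:ℝ) • x') - (2:ℝ) • h x'‖ ≤ φ x' x')
    (x : E)
    (hsum : Summable fun n : ℕ => φ ((2:ℝ)^n • x) ((2:ℝ)^n • x) / 2^n) :
    CauchySeq (fun n : ℕ => ((2:ℝ)^n)⁻¹ • h ((2:ℝ)^n • x)) ∧
    ∃ L : E, Filter.Tendsto (fun n : ℕ => ((2:ℝ)^n)⁻¹ • h ((2:ℝ)^n • x)) atTop (nhds L) := by
  have key : CauchySeq (fun n : ℕ => ((2:ℝ)^n)⁻¹ • h ((2:ℝ)^n • x)) := by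
    apply cauchySeq_of_dist_le_of_summable
      (fun n : ℕ => φ ((2:ℝ)^n • x) ((2:ℝ)^n • x) / 2^n) _ hsum
    intro n
    have hφ0 : 0 ≤ φ ((2:ℝ)^n • x) ((2:ℝ)^n • x) :=
      le_trans (norm_nonneg _) (hb _)
    have h2 : ((2:ℝ)^(n+1) • x) = (2:ℝ) • ((2:ℝ)^n • x) := by
      rw [pow_succ, mul_comm, mul_smul]
    rw [dist_eq_norm]
    have heq : ((2:ℝ)^n)⁻¹ • h ((2:ℝ)^n • x) - ((2:ℝ)^(n+1))⁻¹ • h ((2:ℝ)^(n+1) • x)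
        = ((2:ℝ)^(n+1))⁻¹ • ((2:ℝ) • h ((2:ℝ)^n • x) - h ((2:ℝ) • ((2:ℝ)^n • x))) := by
      rw [h2]
      match_scalars <;> field_simp <;> ring
    rw [heq, norm_smul]
    have hbn := hb ((2:ℝ)^n • x)
    rw [← norm_neg] at hbn
    simp only [neg_sub] at hbn
    have : ‖((2:ℝ)^(n+1))⁻¹‖ = ((2:ℝ)^(n+1))⁻¹ := by
      rw [Real.norm_eq_abs, abs_inv, abs_of_pos]; positivity
    rw [this]
    calc ((2:ℝ)^(n+1))⁻¹ * ‖(2:ℝ) • h ((2:ℝ)^n • x) - h ((2:ℝ) • ((2:ℝ)^n • x))‖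
        ≤ ((2:ℝ)^(n+1))⁻¹ * φ ((2:ℝ)^n • x) ((2:ℝ)^n • x) := by
          apply mul_le_mul_of_nonneg_left hbn; positivity
      _ ≤ φ ((2:ℝ)^n • x) ((2:ℝ)^n • x) / 2^n := by
          rw [div_eq_inv_mul]
          apply mul_le_mul_of_nonneg_right _ hφ0
          apply inv_anti₀ (by positivity)
          apply pow_le_pow_right₀ (by norm_num) (by omega)
  exact ⟨key, cauchySeq_tendsto_of_complete key⟩
end

section
/- Let A, B be complex normed spaces and h : A → B satisfy, for all x ∈ A, all unimodular μ ∈ ℂ, and all n ≥ 1, the bound ‖h(2^n μ x) − 2μ h(2^{n−1} x)‖ ≤ φ(2^{n−1}x, 2^{n−1}x) where 2^{-n} φ(2^n x, 2^n x) → 0 as n → ∞. If T(x) := lim_{n→∞} 2^{-n} h(2^n x) exists for all x ∈ A, then T(μx) = μT(x) for all unimodular μ ∈ ℂ and all x ∈ A. -/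
open Filter Topology

/-- The limit map `T` is homogeneous with respect to unimodular scalars. -/
theorem limit_unimodular_homog {A B : Type*}
    [NormedAddCommGroup A] [NormedSpace ℂ A]
    [NormedAddCommGroup B] [NormedSpace ℂ B] [CompleteSpace B]
    (h : A → B) (φ : A → A → ℝ)
    (hb : ∀ (x : A) (μ : ℂ), ‖μ‖ = 1 → ∀ n : ℕ,
      ‖h ((2:ℂ)^(n+1) • (μ • x)) - (2:ℂ) • (μ • h ((2:ℂ)^n • x))‖
        ≤ φ ((2:ℂ)^n • x) ((2:ℂ)^n • x))
    (hlim : ∀ x : A,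
      Tendsto (fun n : ℕ => φ ((2:ℂ)^n • x) ((2:ℂ)^n • x) / 2^n) atTop (nhds 0))
    (T : A → B)
    (hT : ∀ x : A,
      Tendsto (fun n : ℕ => ((2:ℂ)^n)⁻¹ • h ((2:ℂ)^n • x)) atTop (nhds (T x))) :
    ∀ (μ : ℂ), ‖μ‖ = 1 → ∀ x : A, T (μ • x) = μ • T x := by
  intro μ hμ x
  -- sequence a n = 2^{-(n+1)} h(2^{n+1} μ x) tends to T (μ x)
  have ha : Tendsto (fun n : ℕ => ((2:ℂ)^(n+1))⁻¹ • h ((2:ℂ)^(n+1) • (μ • x)))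
      atTop (nhds (T (μ • x))) := by
    have := (hT (μ • x)).comp (tendsto_add_atTop_nat 1)
    exact this
  -- sequence b n = μ • 2^{-n} h(2^n x) tends to μ • T x
  have hbseq : Tendsto (fun n : ℕ => μ • (((2:ℂ)^n)⁻¹ • h ((2:ℂ)^n • x)))
      atTop (nhds (μ • T x)) := (hT x).const_smul μ
  -- the difference tends to 0
  have hdiff : Tendsto (fun n : ℕ =>
      ((2:ℂ)^(n+1))⁻¹ • h ((2:ℂ)^(n+1) • (μ • x)) - μ • (((2:ℂ)^n)⁻¹ • h ((2:ℂ)^n • x)))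
      atTop (nhds 0) := by
    refine squeeze_zero_norm ?_ (hlim x)
    intro n
    have h2 : ((2:ℂ)^(n+1)) ≠ 0 := pow_ne_zero _ two_ne_zero
    have key : ((2:ℂ)^(n+1))⁻¹ • h ((2:ℂ)^(n+1) • (μ • x)) - μ • (((2:ℂ)^n)⁻¹ • h ((2:ℂ)^n • x))
        = ((2:ℂ)^(n+1))⁻¹ • (h ((2:ℂ)^(n+1) • (μ • x)) - (2:ℂ) • (μ • h ((2:ℂ)^n • x))) := by
      rw [smul_sub]
      congr 1
      rw [smul_smul, smul_smul, smul_smul]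
      congr 1
      field_simp
      ring
    rw [key, norm_smul]
    have hn : ‖((2:ℂ)^(n+1))⁻¹‖ = ((2:ℝ)^(n+1))⁻¹ := by
      simp [norm_inv, norm_pow]
    rw [hn]
    calc ((2:ℝ)^(n+1))⁻¹ * ‖h ((2:ℂ)^(n+1) • (μ • x)) - (2:ℂ) • (μ • h ((2:ℂ)^n • x))‖
        ≤ ((2:ℝ)^(n+1))⁻¹ * φ ((2:ℂ)^n • x) ((2:ℂ)^n • x) := by
          apply mul_le_mul_of_nonneg_left (hb x μ hμ n) (by positivity)
      _ ≤ φ ((2:ℂ)^n • x) ((2:ℂ)^n • x) / 2^n := by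
          have hφ : 0 ≤ φ ((2:ℂ)^n • x) ((2:ℂ)^n • x) :=
            le_trans (norm_nonneg _) (hb x μ hμ n)
          rw [div_eq_inv_mul]
          apply mul_le_mul_of_nonneg_right _ hφ
          apply inv_anti₀ (by positivity)
          exact pow_le_pow_right₀ (by norm_num) (Nat.le_succ n)
  have : Tendsto (fun n : ℕ => μ • (((2:ℂ)^n)⁻¹ • h ((2:ℂ)^n • x)) +
      (((2:ℂ)^(n+1))⁻¹ • h ((2:ℂ)^(n+1) • (μ • x)) - μ • (((2:ℂ)^n)⁻¹ • h ((2:ℂ)^n • x))))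
      atTop (nhds (μ • T x + 0)) := hbseq.add hdiff
  simp only [add_sub_cancel, add_zero] at this
  exact tendsto_nhds_unique ha this
end
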